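/- arXiv:2605.29291 — 10 statements merged into one kernel-verified Lean document; each statement's English description precedes it below -/
import Mathlib

section
/- Suppose there exists a Slater point x̃ ∈ X with A x̃ = b and -g(x̃) ∈ int(K). Then the quantity r* := inf{ ⟨w, -g(x̃)⟩ : w ∈ K*, ‖w‖ = 1 } is attained and satisfies r* > 0, and every dual optimal solution (v*, λ*) satisfies ‖λ*‖ ≤ (f(x̃) - q(v,λ)) / r* for every (v,λ) ∈ dom q. -/
/-!
Write `y = -g x̃`. Since `y` is interior to `K`, a ball `B(y, ε)` lies in `K`, so every
`w ∈ K*` satisfies `ε ‖w‖ ≤ ⟪w, y⟫`; and since a pointed cone of positive dimension is not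
the whole space, the bipolar theorem puts a unit vector in `K*`. Hence `r*` is the
minimum of `⟪·, y⟫` on the nonempty compact set of unit vectors of `K*`, and `r* ≥ ε > 0`.
By homogeneity `r* ‖λ‖ ≤ ⟪λ, y⟫` for all `λ ∈ K*`, and evaluating the dual function at the
Slater point gives `q(v, λ) ≤ q(v*, λ*) ≤ Φ(x̃, (v*, λ*)) = f(x̃) - ⟪λ*, y⟫ ≤ f(x̃) - r* ‖λ*‖`.
-/

open Set ProperCone
open scoped RealInnerProductSpace

variable {E : Type*} [NormedAddCommGroup E] [InnerProductSpace ℝ E]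

def ProperCone.ofClosedConvexSet (K : Set E) (hK0 : (0 : E) ∈ K) (hKconv : Convex ℝ K)
    (hKcone : ∀ c : ℝ, 0 ≤ c → ∀ u ∈ K, c • u ∈ K) (hKclosed : IsClosed K) :
    ProperCone ℝ E where
  carrier := K
  zero_mem' := hK0
  add_mem' {u v} hu hv := by
    have := hKcone 2 zero_le_two _ (hKconv hu hv one_half_pos.le one_half_pos.le (add_halves 1))
    simpa [smul_add, smul_smul] using this
  smul_mem' c u hu := hKcone c c.2 u hu
  isClosed' := hKclosed

@[simp]
theorem ProperCone.mem_ofClosedConvexSet {K : Set E} {hK0 : (0 : E) ∈ K} {hKconv : Convex ℝ K}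
    {hKcone : ∀ c : ℝ, 0 ≤ c → ∀ u ∈ K, c • u ∈ K} {hKclosed : IsClosed K} {x : E} :
    x ∈ ofClosedConvexSet K hK0 hKconv hKcone hKclosed ↔ x ∈ K :=
  Iff.rfl

theorem ProperCone.ne_top_of_pointed [Nontrivial E] {C : ProperCone ℝ E}
    (hC : ∀ u ∈ C, -u ∈ C → u = 0) : C ≠ ⊤ := by
  obtain ⟨u, hu⟩ := exists_ne (0 : E)
  rintro rfl
  exact hu (hC u trivial trivial)

theorem ProperCone.exists_norm_eq_one_mem_innerDual [CompleteSpace E] {C : ProperCone ℝ E}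
    (hC : C ≠ ⊤) :
    ∃ w ∈ innerDual (C : Set E), ‖w‖ = 1 := by
  obtain ⟨w, hw, hw0⟩ : ∃ w ∈ innerDual (C : Set E), w ≠ 0 := by
    by_contra! h
    have hbot : innerDual (C : Set E) = ⊥ :=
      ext fun w => ⟨h w, fun hw => (mem_bot.mp hw) ▸ zero_mem _⟩
    apply hC
    rw [← innerDual_innerDual C, hbot, coe_bot, Set.singleton_zero, innerDual_zero]
  exact ⟨‖w‖⁻¹ • w, (innerDual _).smul_mem hw (by positivity), norm_smul_inv_norm hw0⟩

theorem exists_pos_mul_norm_le_inner_of_mem_interior [CompleteSpace E] {K : Set E} {y : E}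
    (hy : y ∈ interior K) :
    ∃ ε > 0, ∀ w ∈ innerDual K, ε * ‖w‖ ≤ ⟪w, y⟫ := by
  obtain ⟨ε, hε, hball⟩ :=
    Metric.nhds_basis_closedBall.mem_iff.mp (mem_interior_iff_mem_nhds.mp hy)
  refine ⟨ε, hε, fun w hw => ?_⟩
  rcases eq_or_ne w 0 with rfl | hw0
  · simp
  have hwpos : 0 < ‖w‖ := norm_pos_iff.mpr hw0
  have hu : y - (ε / ‖w‖) • w ∈ K := hball <| by
    rw [Metric.mem_closedBall, dist_eq_norm, sub_sub_cancel_left, norm_neg, norm_smul,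
      Real.norm_of_nonneg (by positivity), div_mul_cancel₀ _ hwpos.ne']
  have hdual : 0 ≤ ⟪y - (ε / ‖w‖) • w, w⟫ := hw hu
  rw [inner_sub_left, real_inner_smul_left, real_inner_self_eq_norm_sq, real_inner_comm] at hdual
  have hscale : ε / ‖w‖ * ‖w‖ ^ 2 = ε * ‖w‖ := by field_simp
  linarith

theorem exists_isLeast_inner_of_isClosed [ProperSpace E] {D : Set E} (hD : IsClosed D)
    (hne : ∃ w ∈ D, ‖w‖ = 1) (y : E) :
    ∃ w ∈ D, ‖w‖ = 1 ∧
      IsLeast {r | ∃ w ∈ D, ‖w‖ = 1 ∧ r = ⟪w, y⟫} ⟪w, y⟫ := by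
  obtain ⟨w₀, hw₀, hw₀1⟩ := hne
  obtain ⟨w, ⟨hw, hw1⟩, hmin⟩ := ((isCompact_sphere 0 1).inter_left hD).exists_isMinOn
    ⟨w₀, hw₀, mem_sphere_zero_iff_norm.mpr hw₀1⟩
    (continuous_id.inner continuous_const : Continuous fun w : E => ⟪w, y⟫).continuousOn
  rw [mem_sphere_zero_iff_norm] at hw1
  refine ⟨w, hw, hw1, ⟨w, hw, hw1, rfl⟩, ?_⟩
  rintro _ ⟨v, hv, hv1, rfl⟩
  exact hmin ⟨hv, mem_sphere_zero_iff_norm.mpr hv1⟩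

theorem ProperCone.mul_norm_le_inner_of_forall_norm_eq_one (C : ProperCone ℝ E) {r : ℝ}
    {y : E} (h : ∀ w ∈ C, ‖w‖ = 1 → r ≤ ⟪w, y⟫) {w : E} (hw : w ∈ C) :
    r * ‖w‖ ≤ ⟪w, y⟫ := by
  rcases eq_or_ne w 0 with rfl | hw0
  · simp
  have hunit := h _ (C.smul_mem hw (inv_nonneg.2 (norm_nonneg w))) (norm_smul_inv_norm hw0)
  rw [real_inner_smul_left] at hunit
  calc r * ‖w‖ ≤ (‖w‖⁻¹ * ⟪w, y⟫) * ‖w‖ := by gcongr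
    _ = ⟪w, y⟫ := by field_simp

theorem stmt_0_general {n m p : ℕ} (hm : 1 ≤ m)
    (X : Set (EuclideanSpace ℝ (Fin n)))
    (K : Set (EuclideanSpace ℝ (Fin m)))
    (A : Matrix (Fin p) (Fin n) ℝ) (b : EuclideanSpace ℝ (Fin p))
    (f : EuclideanSpace ℝ (Fin n) → ℝ)
    (g : EuclideanSpace ℝ (Fin n) → EuclideanSpace ℝ (Fin m))
    (hXcpt : IsCompact X)
    (hKclosed : IsClosed K) (hKconv : Convex ℝ K)
    (hKcone : ∀ c : ℝ, 0 ≤ c → ∀ u ∈ K, c • u ∈ K)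
    (hKpointed : ∀ u ∈ K, -u ∈ K → u = 0)
    (hfcont : Continuous f)
    (hgcont : Continuous g)
    (Kstar : Set (EuclideanSpace ℝ (Fin m)))
    (hKstar : Kstar = {w | ∀ u ∈ K, 0 ≤ ⟪w, u⟫})
    (Φ : EuclideanSpace ℝ (Fin n) → EuclideanSpace ℝ (Fin p) × EuclideanSpace ℝ (Fin m) → ℝ)
    (hΦ : ∀ x v lam, Φ x (v, lam) =
      f x + ⟪v, Matrix.toEuclideanLin A x - b⟫ + ⟪lam, g x⟫)
    (q : EuclideanSpace ℝ (Fin p) → EuclideanSpace ℝ (Fin m) → ℝ)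
    (hq : ∀ v lam, lam ∈ Kstar → q v lam = sInf ((fun x => Φ x (v, lam)) '' X))
    -- Slater point
    (xt : EuclideanSpace ℝ (Fin n)) (hxtX : xt ∈ X)
    (hxtA : Matrix.toEuclideanLin A xt = b) (hxtg : -g xt ∈ interior K)
    (rstar : ℝ)
    (hrstar : rstar = sInf {r : ℝ | ∃ w ∈ Kstar, ‖w‖ = 1 ∧ r = ⟪w, -g xt⟫}) :
    (∃ w ∈ Kstar, ‖w‖ = 1 ∧ ⟪w, -g xt⟫ = rstar) ∧ 0 < rstar ∧
      ∀ vstar lamstar, lamstar ∈ Kstar →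
        (∀ v lam, lam ∈ Kstar → q v lam ≤ q vstar lamstar) →
        ∀ v lam, lam ∈ Kstar → BddBelow ((fun x => Φ x (v, lam)) '' X) →
          ‖lamstar‖ ≤ (f xt - q v lam) / rstar := by
  have hK0 : (0 : EuclideanSpace ℝ (Fin m)) ∈ K := by
    simpa using hKcone 0 le_rfl _ (interior_subset hxtg)
  let C := ProperCone.ofClosedConvexSet K hK0 hKconv hKcone hKclosed
  have : Nonempty (Fin m) := ⟨⟨0, hm⟩⟩
  have hC : C ≠ ⊤ := ne_top_of_pointed hKpointed
  have hKstar' : Kstar = innerDual (C : Set (EuclideanSpace ℝ (Fin m))) := by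
    ext w
    simp [hKstar, C, real_inner_comm]
  subst hKstar'
  obtain ⟨w, hw, hw1, hleast⟩ := exists_isLeast_inner_of_isClosed (innerDual _).isClosed
    (exists_norm_eq_one_mem_innerDual hC) (-g xt)
  rw [hleast.csInf_eq] at hrstar
  obtain ⟨ε, hε, hεw⟩ := exists_pos_mul_norm_le_inner_of_mem_interior hxtg
  have hpos : 0 < rstar := by
    have hεle := hεw w hw
    rw [hw1, mul_one] at hεle
    linarith
  refine ⟨⟨w, hw, hw1, hrstar.symm⟩, hpos, ?_⟩
  intro vstar lamstar hlamstar hopt v lam hlam _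
  have hcont : Continuous fun x => Φ x (vstar, lamstar) := by
    have hA := (Matrix.toEuclideanLin A).continuous_of_finiteDimensional
    simp only [hΦ]
    fun_prop
  have hslater : q vstar lamstar ≤ f xt - ⟪lamstar, -g xt⟫ := by
    rw [hq _ _ hlamstar]
    refine (csInf_le (hXcpt.image hcont).bddBelow ⟨xt, hxtX, rfl⟩).trans_eq ?_
    simp [hΦ, hxtA, inner_neg_right, sub_eq_add_neg]
  have hnorm : rstar * ‖lamstar‖ ≤ ⟪lamstar, -g xt⟫ :=
    (innerDual _).mul_norm_le_inner_of_forall_norm_eq_one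
      (fun w hw hw1 => hrstar ▸ hleast.2 ⟨w, hw, hw1, rfl⟩) hlamstar
  rw [le_div_iff₀ hpos]
  linarith [hopt v lam hlam]

/-- For the nonlinear conic program
`min { f x : x ∈ X, A x = b, g x ∈ -K }` (with `X` nonempty compact convex, `K` a proper
cone, `f` convex continuous, `g` continuous and `K`-convex on `X`), if there is a Slater
point `x̃ ∈ X` with `A x̃ = b` and `-g x̃ ∈ int K`, then
`r* = inf { ⟨w, -g x̃⟩ : w ∈ K*, ‖w‖ = 1 }` is attained and positive, and every dual
optimal solution `(v*, λ*)` satisfies `‖λ*‖ ≤ (f x̃ - q(v,λ)) / r*` for every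
`(v,λ) ∈ dom q`, where `q` is the dual function. -/
theorem stmt_0 {n m p : ℕ} (hm : 1 ≤ m)
    (X : Set (EuclideanSpace ℝ (Fin n)))
    (K : Set (EuclideanSpace ℝ (Fin m)))
    (A : Matrix (Fin p) (Fin n) ℝ) (b : EuclideanSpace ℝ (Fin p))
    (f : EuclideanSpace ℝ (Fin n) → ℝ)
    (g : EuclideanSpace ℝ (Fin n) → EuclideanSpace ℝ (Fin m))
    (hXne : X.Nonempty) (hXcpt : IsCompact X) (hXconv : Convex ℝ X)
    (hKclosed : IsClosed K) (hKconv : Convex ℝ K)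
    (hKcone : ∀ c : ℝ, 0 ≤ c → ∀ u ∈ K, c • u ∈ K)
    (hKpointed : ∀ u ∈ K, -u ∈ K → u = 0)
    (hKint : (interior K).Nonempty)
    (hfconv : ConvexOn ℝ Set.univ f) (hfcont : Continuous f)
    (hgcont : Continuous g)
    (hgKconv : ∀ x ∈ X, ∀ x' ∈ X, ∀ t : ℝ, 0 ≤ t → t ≤ 1 →
      t • g x + (1 - t) • g x' - g (t • x + (1 - t) • x') ∈ K)
    (Kstar : Set (EuclideanSpace ℝ (Fin m)))
    (hKstar : Kstar = {w | ∀ u ∈ K, 0 ≤ ⟪w, u⟫})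
    (Φ : EuclideanSpace ℝ (Fin n) → EuclideanSpace ℝ (Fin p) × EuclideanSpace ℝ (Fin m) → ℝ)
    (hΦ : ∀ x v lam, Φ x (v, lam) =
      f x + ⟪v, Matrix.toEuclideanLin A x - b⟫ + ⟪lam, g x⟫)
    (q : EuclideanSpace ℝ (Fin p) → EuclideanSpace ℝ (Fin m) → ℝ)
    (hq : ∀ v lam, lam ∈ Kstar → q v lam = sInf ((fun x => Φ x (v, lam)) '' X))
    -- Slater point
    (xt : EuclideanSpace ℝ (Fin n)) (hxtX : xt ∈ X)
    (hxtA : Matrix.toEuclideanLin A xt = b) (hxtg : -g xt ∈ interior K)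
    (rstar : ℝ)
    (hrstar : rstar = sInf {r : ℝ | ∃ w ∈ Kstar, ‖w‖ = 1 ∧ r = ⟪w, -g xt⟫}) :
    (∃ w ∈ Kstar, ‖w‖ = 1 ∧ ⟪w, -g xt⟫ = rstar) ∧ 0 < rstar ∧
      ∀ vstar lamstar, lamstar ∈ Kstar →
        (∀ v lam, lam ∈ Kstar → q v lam ≤ q vstar lamstar) →
        ∀ v lam, lam ∈ Kstar → BddBelow ((fun x => Φ x (v, lam)) '' X) →
          ‖lamstar‖ ≤ (f xt - q v lam) / rstar :=
  stmt_0_general hm X K A b f g hXcpt hKclosed hKconv hKcone hKpointed hfcont hgcont Kstar hKstar Φ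
    hΦ q hq xt hxtX hxtA hxtg rstar hrstar
end

section
/- Suppose that f and g are continuously differentiable on an open set containing X, that C_g > 0 is a Lipschitz constant of g on X (‖g(x) - g(x')‖ ≤ C_g ‖x - x'‖ for all x, x' ∈ X), that A has full row rank p (so its smallest singular value σ_min(A) is positive), that there exists a Slater point x̃ ∈ X with A x̃ = b and -g(x̃) ∈ int(K), and that there exists a primal optimal solution x* of the NCP with x* ∈ int(X). Let r* := inf{ ⟨w, -g(x̃)⟩ : w ∈ K*, ‖w‖ = 1 }. Then every dual optimal solution (v*, λ*) satisfies, for every (v,λ) ∈ dom q, ‖v*‖ ≤ (1/σ_min(A)) · ( max_{x ∈ X} ‖∇f(x)‖ + C_g · (f(x̃) - q(v,λ)) / r* ). In particular, the set of dual optimal solutions is bounded. -/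
set_option maxHeartbeats 4000000


open scoped RealInnerProductSpace

/-- For the nonlinear conic program `min { f x : x ∈ X, A x = b, g x ∈ -K }`
with `f, g` continuously differentiable on an open set containing `X`, `C_g > 0` a
Lipschitz constant of `g` on `X`, `A` of full row rank `p` (with smallest singular value
`σ_min(A) = inf{‖Aᵀv‖ : ‖v‖ = 1}`), a Slater point `x̃`, and a primal optimal solution
`x* ∈ int X`, every dual optimal solution `(v*, λ*)` satisfies, for every
`(v,λ) ∈ dom q`,
`‖v*‖ ≤ (1/σ_min(A))·( max_{x ∈ X} ‖∇f x‖ + C_g·(f x̃ - q(v,λ))/r* )`,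
where `r* = inf{ ⟨w, -g x̃⟩ : w ∈ K*, ‖w‖ = 1 }`.  In particular, the set of dual optimal
solutions is bounded. -/
theorem stmt_1 {n m p : ℕ} (hm : 1 ≤ m)
    (X : Set (EuclideanSpace ℝ (Fin n)))
    (K : Set (EuclideanSpace ℝ (Fin m)))
    (A : Matrix (Fin p) (Fin n) ℝ) (b : EuclideanSpace ℝ (Fin p))
    (f : EuclideanSpace ℝ (Fin n) → ℝ)
    (g : EuclideanSpace ℝ (Fin n) → EuclideanSpace ℝ (Fin m))
    (hXne : X.Nonempty) (hXcpt : IsCompact X) (hXconv : Convex ℝ X)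
    (hKclosed : IsClosed K) (hKconv : Convex ℝ K)
    (hKcone : ∀ c : ℝ, 0 ≤ c → ∀ u ∈ K, c • u ∈ K)
    (hKpointed : ∀ u ∈ K, -u ∈ K → u = 0)
    (hKint : (interior K).Nonempty)
    (hfconv : ConvexOn ℝ Set.univ f)
    (hgKconv : ∀ x ∈ X, ∀ x' ∈ X, ∀ t : ℝ, 0 ≤ t → t ≤ 1 →
      t • g x + (1 - t) • g x' - g (t • x + (1 - t) • x') ∈ K)
    -- continuous differentiability on an open set containing X
    (hsmooth : ∃ U, IsOpen U ∧ X ⊆ U ∧ ContDiffOn ℝ 1 f U ∧ ContDiffOn ℝ 1 g U)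
    -- Lipschitz constant of g on X
    (Cg : ℝ) (hCg : 0 < Cg)
    (hCgLip : ∀ x ∈ X, ∀ x' ∈ X, ‖g x - g x'‖ ≤ Cg * ‖x - x'‖)
    -- A has full row rank
    (hrank : A.rank = p)
    (σmin : ℝ)
    (hσmin : σmin = sInf {s : ℝ | ∃ v : EuclideanSpace ℝ (Fin p),
      ‖v‖ = 1 ∧ s = ‖Matrix.toEuclideanLin A.transpose v‖})
    (Kstar : Set (EuclideanSpace ℝ (Fin m)))
    (hKstar : Kstar = {w | ∀ u ∈ K, 0 ≤ ⟪w, u⟫})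
    (Φ : EuclideanSpace ℝ (Fin n) → EuclideanSpace ℝ (Fin p) × EuclideanSpace ℝ (Fin m) → ℝ)
    (hΦ : ∀ x v lam, Φ x (v, lam) =
      f x + ⟪v, Matrix.toEuclideanLin A x - b⟫ + ⟪lam, g x⟫)
    (q : EuclideanSpace ℝ (Fin p) → EuclideanSpace ℝ (Fin m) → ℝ)
    (hq : ∀ v lam, lam ∈ Kstar → q v lam = sInf ((fun x => Φ x (v, lam)) '' X))
    -- Slater point
    (xt : EuclideanSpace ℝ (Fin n)) (hxtX : xt ∈ X)
    (hxtA : Matrix.toEuclideanLin A xt = b) (hxtg : -g xt ∈ interior K)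
    -- primal optimal solution in the interior of X
    (xstar : EuclideanSpace ℝ (Fin n)) (hxs : xstar ∈ X)
    (hxsA : Matrix.toEuclideanLin A xstar = b) (hxsg : -g xstar ∈ K)
    (hxsopt : ∀ x ∈ X, Matrix.toEuclideanLin A x = b → -g x ∈ K → f xstar ≤ f x)
    (hxsint : xstar ∈ interior X)
    (rstar : ℝ)
    (hrstar : rstar = sInf {r : ℝ | ∃ w ∈ Kstar, ‖w‖ = 1 ∧ r = ⟪w, -g xt⟫})
    (Gmax : ℝ)
    (hGmax : Gmax = sSup {r : ℝ | ∃ x ∈ X, r = ‖gradient f x‖}) :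
    (∀ vstar lamstar, lamstar ∈ Kstar →
      (∀ v lam, lam ∈ Kstar → q v lam ≤ q vstar lamstar) →
      ∀ v lam, lam ∈ Kstar → BddBelow ((fun x => Φ x (v, lam)) '' X) →
        ‖vstar‖ ≤ (1 / σmin) * (Gmax + Cg * (f xt - q v lam) / rstar)) ∧
    Bornology.IsBounded {y : EuclideanSpace ℝ (Fin p) × EuclideanSpace ℝ (Fin m) |
      y.2 ∈ Kstar ∧ ∀ v lam, lam ∈ Kstar → q v lam ≤ q y.1 y.2} := by
  obtain ⟨U, hUopen, hXU, hfC1, hgC1⟩ := hsmooth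
  have hfc : ContinuousOn f X := hfC1.continuousOn.mono hXU
  have hgc : ContinuousOn g X := hgC1.continuousOn.mono hXU
  set TA : EuclideanSpace ℝ (Fin n) →ₗ[ℝ] EuclideanSpace ℝ (Fin p) :=
    Matrix.toEuclideanLin A with hTA
  have hTAc : Continuous TA := LinearMap.continuous_of_finiteDimensional _
  -- continuity of the coupling function in x
  have hΦcont : ∀ v lam, ContinuousOn (fun x => Φ x (v, lam)) X := by
    intro v lam
    have : ContinuousOn (fun x => f x + ⟪v, TA x - b⟫ + ⟪lam, g x⟫) X := by
      refine ContinuousOn.add (hfc.add ?_) ?_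
      · exact (continuous_const.inner (hTAc.sub continuous_const)).continuousOn
      · exact (continuous_const.inner continuous_id).comp_continuousOn hgc
    exact this.congr fun x _ => by rw [hΦ]
  have hbddall : ∀ v lam, BddBelow ((fun x => Φ x (v, lam)) '' X) :=
    fun v lam => (hXcpt.image_of_continuousOn (hΦcont v lam)).bddBelow
  have hqleΦ : ∀ v lam, lam ∈ Kstar → ∀ x ∈ X, q v lam ≤ Φ x (v, lam) := by
    intro v lam hlam x hx
    rw [hq v lam hlam]
    exact csInf_le (hbddall v lam) ⟨x, hx, rfl⟩
  -- basic cone facts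
  have hKsub : interior K ⊆ K := interior_subset
  have h0K : (0 : EuclideanSpace ℝ (Fin m)) ∈ K := by
    obtain ⟨u0, hu0⟩ := hKint
    simpa using hKcone 0 le_rfl u0 (hKsub hu0)
  have hKadd : ∀ u1 ∈ K, ∀ u2 ∈ K, u1 + u2 ∈ K := by
    intro u1 h1 u2 h2
    have := hKconv h1 h2 (by norm_num : (0:ℝ) ≤ 1/2) (by norm_num : (0:ℝ) ≤ 1/2) (by norm_num)
    have h2' := hKcone 2 (by norm_num) _ this
    have : (2:ℝ) • ((1/2 : ℝ) • u1 + (1/2 : ℝ) • u2) = u1 + u2 := by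
      rw [smul_add, smul_smul, smul_smul]; norm_num
    rwa [this] at h2'
  have hKstarclosed : IsClosed Kstar := by
    rw [hKstar]
    have : {w : EuclideanSpace ℝ (Fin m) | ∀ u ∈ K, 0 ≤ ⟪w, u⟫} =
        ⋂ u ∈ K, {w | 0 ≤ ⟪w, u⟫} := by ext w; simp
    rw [this]
    exact isClosed_biInter fun u _ =>
      isClosed_le continuous_const (continuous_id.inner continuous_const)
  have hKstarcone : ∀ c : ℝ, 0 ≤ c → ∀ w ∈ Kstar, c • w ∈ Kstar := by
    intro c hc w hw
    rw [hKstar] at hw ⊢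
    intro u hu
    rw [real_inner_smul_left]
    exact mul_nonneg hc (hw u hu)
  have h0Kstar : (0 : EuclideanSpace ℝ (Fin m)) ∈ Kstar := by
    rw [hKstar]; intro u hu; simp
  -- `Kstar` contains a unit vector
  have hKne_univ : K ≠ Set.univ := by
    intro h
    have h1 : EuclideanSpace.single (⟨0, hm⟩ : Fin m) (1:ℝ) ∈ K := h ▸ Set.mem_univ _
    have h2 : -EuclideanSpace.single (⟨0, hm⟩ : Fin m) (1:ℝ) ∈ K := h ▸ Set.mem_univ _
    have := hKpointed _ h1 h2
    have hn : ‖EuclideanSpace.single (⟨0, hm⟩ : Fin m) (1:ℝ)‖ = 1 := by simp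
    rw [this] at hn; simp at hn
  have hKstar_unit : ∃ w ∈ Kstar, ‖w‖ = 1 := by
    obtain ⟨z, hz⟩ : ∃ z, z ∉ K := by
      by_contra h; push_neg at h
      exact hKne_univ (Set.eq_univ_of_forall h)
    obtain ⟨φ, u, hKu, huz⟩ := geometric_hahn_banach_closed_point hKconv hKclosed hz
    have hu0 : (0:ℝ) < u := by simpa using hKu 0 h0K
    have hφK : ∀ a ∈ K, φ a ≤ 0 := by
      intro a ha
      by_contra hcon; push_neg at hcon
      have hc : (0:ℝ) ≤ (u+1)/φ a := by positivity
      have h2 := hKu _ (hKcone _ hc a ha)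
      rw [map_smul] at h2
      simp only [smul_eq_mul] at h2
      rw [div_mul_cancel₀ _ hcon.ne'] at h2; linarith
    set w0 := (InnerProductSpace.toDual ℝ (EuclideanSpace ℝ (Fin m))).symm (-φ) with hw0
    have hw0in : ∀ a, ⟪w0, a⟫ = -(φ a) := by
      intro a
      rw [hw0, ← InnerProductSpace.toDual_apply_apply,
        (InnerProductSpace.toDual ℝ (EuclideanSpace ℝ (Fin m))).apply_symm_apply]
      simp
    have hw0K : w0 ∈ Kstar := by
      rw [hKstar]; intro a ha
      rw [hw0in a]
      simpa using hφK a ha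
    have hw0ne : w0 ≠ 0 := by
      intro h
      have h1 : ⟪w0, z⟫ = -(φ z) := hw0in z
      rw [h, inner_zero_left] at h1
      linarith
    refine ⟨‖w0‖⁻¹ • w0, hKstarcone _ (by positivity) _ hw0K, ?_⟩
    rw [norm_smul, norm_inv, norm_norm, inv_mul_cancel₀ (norm_pos_iff.2 hw0ne).ne']
  -- facts about rstar
  have hSrbdd : BddBelow {r : ℝ | ∃ w ∈ Kstar, ‖w‖ = 1 ∧ r = ⟪w, -g xt⟫} := by
    refine ⟨0, ?_⟩
    rintro r ⟨w, hw, _, rfl⟩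
    rw [hKstar] at hw
    exact hw _ (hKsub hxtg)
  have hrle1 : ∀ w ∈ Kstar, ‖w‖ = 1 → rstar ≤ ⟪w, -g xt⟫ := by
    intro w hw hw1
    rw [hrstar]
    exact csInf_le hSrbdd ⟨w, hw, hw1, rfl⟩
  have hrpos : 0 < rstar := by
    have hset : {r : ℝ | ∃ w ∈ Kstar, ‖w‖ = 1 ∧ r = ⟪w, -g xt⟫} =
        (fun w => ⟪w, -g xt⟫) '' (Kstar ∩ Metric.sphere 0 1) := by
      ext r
      constructor
      · rintro ⟨w, hw, hw1, rfl⟩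
        exact ⟨w, ⟨hw, by simpa using hw1⟩, rfl⟩
      · rintro ⟨w, ⟨hw, hw1⟩, rfl⟩
        exact ⟨w, hw, by simpa using hw1, rfl⟩
    have hcpt : IsCompact (Kstar ∩ Metric.sphere 0 1) :=
      (isCompact_sphere (0 : EuclideanSpace ℝ (Fin m)) 1).inter_left hKstarclosed
    have hne : (Kstar ∩ Metric.sphere 0 1).Nonempty := by
      obtain ⟨w, hw, hw1⟩ := hKstar_unit
      exact ⟨w, hw, by simpa using hw1⟩
    have hcont : ContinuousOn (fun w : EuclideanSpace ℝ (Fin m) => ⟪w, -g xt⟫)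
        (Kstar ∩ Metric.sphere 0 1) :=
      (continuous_id.inner continuous_const).continuousOn
    have hmem : rstar ∈ (fun w => ⟪w, -g xt⟫) '' (Kstar ∩ Metric.sphere 0 1) := by
      rw [hrstar, hset]
      exact (hcpt.image_of_continuousOn hcont).sInf_mem (hne.image _)
    obtain ⟨w2, ⟨hw2K, hw2s⟩, heq⟩ := hmem
    have hw2n : ‖w2‖ = 1 := by simpa using hw2s
    obtain ⟨ε, hε, hball⟩ := Metric.isOpen_iff.1 isOpen_interior (-g xt) hxtg
    have hmem2 : -g xt - (ε/2) • w2 ∈ K := by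
      apply hKsub; apply hball
      rw [Metric.mem_ball, dist_eq_norm]
      have : -g xt - (ε/2) • w2 - -g xt = -((ε/2) • w2) := by abel
      rw [this, norm_neg, norm_smul, hw2n, mul_one, Real.norm_eq_abs,
        abs_of_pos (half_pos hε)]
      linarith
    have hge : 0 ≤ ⟪w2, -g xt - (ε/2) • w2⟫ := by
      rw [hKstar] at hw2K
      exact hw2K _ hmem2
    rw [inner_sub_right, real_inner_smul_right, real_inner_self_eq_norm_sq, hw2n] at hge
    rw [← heq]
    nlinarith
  have hrle : ∀ w ∈ Kstar, rstar * ‖w‖ ≤ ⟪w, -g xt⟫ := by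
    intro w hw
    rcases eq_or_ne w 0 with rfl | hw0
    · simp
    · have hnw : (0:ℝ) < ‖w‖ := norm_pos_iff.2 hw0
      have hmem : ‖w‖⁻¹ • w ∈ Kstar := hKstarcone _ (by positivity) w hw
      have hn1 : ‖‖w‖⁻¹ • w‖ = 1 := by
        rw [norm_smul, norm_inv, norm_norm, inv_mul_cancel₀ hnw.ne']
      have := hrle1 _ hmem hn1
      rw [real_inner_smul_left] at this
      calc rstar * ‖w‖ ≤ (‖w‖⁻¹ * ⟪w, -g xt⟫) * ‖w‖ := by
            exact mul_le_mul_of_nonneg_right this hnw.le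
        _ = ⟪w, -g xt⟫ := by field_simp
  -- weak duality at the Slater point
  have hwd : ∀ v lam, lam ∈ Kstar → q v lam ≤ f xt := by
    intro v lam hlam
    have h1 := hqleΦ v lam hlam xt hxtX
    have h2 : Φ xt (v, lam) = f xt + ⟪lam, g xt⟫ := by
      rw [hΦ, hxtA]; simp
    have h3 : ⟪lam, g xt⟫ ≤ 0 := by
      have : 0 ≤ ⟪lam, -g xt⟫ := by rw [hKstar] at hlam; exact hlam _ (hKsub hxtg)
      rw [inner_neg_right] at this; linarith
    rw [h2] at h1; linarith
  -- bound on ‖lamstar‖ for dual optimal solutions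
  have hlambd : ∀ vstar lamstar, lamstar ∈ Kstar →
      (∀ v lam, lam ∈ Kstar → q v lam ≤ q vstar lamstar) →
      ∀ v lam, lam ∈ Kstar → ‖lamstar‖ ≤ (f xt - q v lam) / rstar := by
    intro vstar lamstar hls hopt v lam hlam
    have h1 : q v lam ≤ q vstar lamstar := hopt v lam hlam
    have h2 := hqleΦ vstar lamstar hls xt hxtX
    have h3 : Φ xt (vstar, lamstar) = f xt - ⟪lamstar, -g xt⟫ := by
      rw [hΦ, hxtA]; rw [inner_neg_right]; simp
    have h4 := hrle lamstar hls
    rw [le_div_iff₀ hrpos]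
    rw [h3] at h2
    nlinarith
  -- strong duality: any dual optimal solution attains at least f xstar
  have hsd : ∀ vstar lamstar, lamstar ∈ Kstar →
      (∀ v lam, lam ∈ Kstar → q v lam ≤ q vstar lamstar) →
      f xstar ≤ q vstar lamstar := by
    have key : ∀ ε : ℝ, 0 < ε → ∃ vh : EuclideanSpace ℝ (Fin p),
        ∃ lamh ∈ Kstar,
        ∀ x ∈ X, f xstar - ε ≤ f x + ⟪vh, TA x - b⟫ + ⟪lamh, g x⟫ := by
      intro ε hε
      set C : Set (ℝ × EuclideanSpace ℝ (Fin p) × EuclideanSpace ℝ (Fin m)) :=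
        {z | ∃ x ∈ X, ∃ u ∈ K, ∃ s : ℝ, 0 ≤ s ∧
          z = (f x - f xstar + s, TA x - b, g x + u)} with hC
      have hCconv : Convex ℝ C := by
        rintro z1 ⟨x1, hx1, u1, hu1, s1, hs1, rfl⟩ z2 ⟨x2, hx2, u2, hu2, s2, hs2, rfl⟩
          t1 t2 ht1 ht2 hts
        have ht2e : t2 = 1 - t1 := by linarith
        subst ht2e
        have hx3 : t1 • x1 + (1 - t1) • x2 ∈ X := hXconv hx1 hx2 ht1 ht2 hts
        have hgK := hgKconv x1 hx1 x2 hx2 t1 ht1 (by linarith)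
        have hu3 : (t1 • g x1 + (1 - t1) • g x2 - g (t1 • x1 + (1 - t1) • x2)) +
            (t1 • u1 + (1 - t1) • u2) ∈ K :=
          hKadd _ hgK _ (hKadd _ (hKcone t1 ht1 u1 hu1) _ (hKcone (1 - t1) ht2 u2 hu2))
        have hfle : f (t1 • x1 + (1 - t1) • x2) ≤ t1 * f x1 + (1 - t1) * f x2 := by
          have := hfconv.2 (Set.mem_univ x1) (Set.mem_univ x2) ht1 ht2 hts
          simpa [smul_eq_mul] using this
        refine ⟨t1 • x1 + (1 - t1) • x2, hx3,
          (t1 • g x1 + (1 - t1) • g x2 - g (t1 • x1 + (1 - t1) • x2)) +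
            (t1 • u1 + (1 - t1) • u2), hu3,
          (t1 * f x1 + (1 - t1) * f x2 - f (t1 • x1 + (1 - t1) • x2)) +
            (t1 * s1 + (1 - t1) * s2), ?_, ?_⟩
        · have h1 : 0 ≤ t1 * s1 + (1 - t1) * s2 := by positivity
          linarith
        · simp only [Prod.smul_mk, Prod.mk_add_mk, Prod.mk.injEq, smul_eq_mul]
          refine ⟨by ring, ?_, ?_⟩
          · rw [map_add, map_smul, map_smul]
            module
          · module
      have hPnot : ((-ε, 0, 0) :
          ℝ × EuclideanSpace ℝ (Fin p) × EuclideanSpace ℝ (Fin m)) ∉ closure C := by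
        intro hmem
        obtain ⟨zs, hzs, hzlim⟩ := mem_closure_iff_seq_limit.1 hmem
        choose xs hxsX us husK ss hssnn hzeq using hzs
        obtain ⟨xl, hxlX, φ, hφmono, hxlim⟩ := hXcpt.tendsto_subseq hxsX
        have hzlim' : Filter.Tendsto (fun k => zs (φ k)) Filter.atTop
            (nhds (-ε, 0, 0)) := hzlim.comp hφmono.tendsto_atTop
        have hxin : Filter.Tendsto (fun k => xs (φ k)) Filter.atTop (nhdsWithin xl X) :=
          tendsto_nhdsWithin_of_tendsto_nhds_of_eventually_within _ hxlim
            (Filter.Eventually.of_forall fun k => hxsX (φ k))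
        have hfx : Filter.Tendsto (fun k => f (xs (φ k))) Filter.atTop (nhds (f xl)) :=
          (hfc xl hxlX).tendsto.comp hxin
        have hgx : Filter.Tendsto (fun k => g (xs (φ k))) Filter.atTop (nhds (g xl)) :=
          (hgc xl hxlX).tendsto.comp hxin
        have h1 : Filter.Tendsto (fun k => (zs (φ k)).1) Filter.atTop (nhds (-ε)) :=
          (continuous_fst.tendsto _).comp hzlim'
        have h2 : Filter.Tendsto (fun k => (zs (φ k)).2.1) Filter.atTop
            (nhds (0 : EuclideanSpace ℝ (Fin p))) :=
          ((continuous_fst.comp continuous_snd).tendsto _).comp hzlim'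
        have h3 : Filter.Tendsto (fun k => (zs (φ k)).2.2) Filter.atTop
            (nhds (0 : EuclideanSpace ℝ (Fin m))) :=
          ((continuous_snd.comp continuous_snd).tendsto _).comp hzlim'
        have he1 : ∀ k, (zs (φ k)).1 = f (xs (φ k)) - f xstar + ss (φ k) := by
          intro k; rw [hzeq (φ k)]
        have he2 : ∀ k, (zs (φ k)).2.1 = TA (xs (φ k)) - b := by
          intro k; rw [hzeq (φ k)]
        have he3 : ∀ k, (zs (φ k)).2.2 = g (xs (φ k)) + us (φ k) := by
          intro k; rw [hzeq (φ k)]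
        -- A xl = b
        have hTAx : Filter.Tendsto (fun k => TA (xs (φ k)) - b) Filter.atTop
            (nhds (TA xl - b)) :=
          ((hTAc.tendsto _).comp hxlim).sub tendsto_const_nhds
        have hTAeq : TA xl - b = 0 := by
          refine tendsto_nhds_unique hTAx ?_
          have : (fun k => TA (xs (φ k)) - b) = fun k => (zs (φ k)).2.1 :=
            funext fun k => (he2 k).symm
          rw [this]; exact h2
        have hTAxl : TA xl = b := by
          have := hTAeq; rwa [sub_eq_zero] at this
        -- -g xl ∈ K
        have husl : Filter.Tendsto (fun k => us (φ k)) Filter.atTop (nhds (-g xl)) := by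
          have heq : (fun k => us (φ k)) = fun k => (zs (φ k)).2.2 - g (xs (φ k)) := by
            funext k; rw [he3 k]; abel
          rw [heq]
          have := h3.sub hgx
          simpa using this
        have hgl : -g xl ∈ K :=
          hKclosed.mem_of_tendsto husl (Filter.Eventually.of_forall fun k => husK (φ k))
        -- limit of ss
        have hssl : Filter.Tendsto (fun k => ss (φ k)) Filter.atTop
            (nhds (-ε - f xl + f xstar)) := by
          have heq : (fun k => ss (φ k)) = fun k => (zs (φ k)).1 - f (xs (φ k)) + f xstar := by
            funext k; rw [he1 k]; ring
          rw [heq]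
          exact (h1.sub hfx).add tendsto_const_nhds
        have hssge : (0:ℝ) ≤ -ε - f xl + f xstar :=
          ge_of_tendsto hssl (Filter.Eventually.of_forall fun k => hssnn (φ k))
        have := hxsopt xl hxlX hTAxl hgl
        linarith
      obtain ⟨φ₀, c, hPc, hCcl⟩ :=
        geometric_hahn_banach_point_closed hCconv.closure isClosed_closure hPnot
      have hCc : ∀ z ∈ C, c < φ₀ z := fun z hz => hCcl z (subset_closure hz)
      set μ : ℝ := φ₀ (1, 0, 0) with hμdef
      set ψp : EuclideanSpace ℝ (Fin p) →L[ℝ] ℝ :=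
        φ₀.comp ((ContinuousLinearMap.inr ℝ ℝ
            (EuclideanSpace ℝ (Fin p) × EuclideanSpace ℝ (Fin m))).comp
          (ContinuousLinearMap.inl ℝ (EuclideanSpace ℝ (Fin p))
            (EuclideanSpace ℝ (Fin m)))) with hψpdef
      set ψm : EuclideanSpace ℝ (Fin m) →L[ℝ] ℝ :=
        φ₀.comp ((ContinuousLinearMap.inr ℝ ℝ
            (EuclideanSpace ℝ (Fin p) × EuclideanSpace ℝ (Fin m))).comp
          (ContinuousLinearMap.inr ℝ (EuclideanSpace ℝ (Fin p))
            (EuclideanSpace ℝ (Fin m)))) with hψmdef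
      have hdecomp : ∀ (a : ℝ) (y : EuclideanSpace ℝ (Fin p)) (z : EuclideanSpace ℝ (Fin m)),
          φ₀ (a, y, z) = a * μ + (ψp y + ψm z) := by
        intro a y z
        have hz : ((a, y, z) : ℝ × EuclideanSpace ℝ (Fin p) × EuclideanSpace ℝ (Fin m)) =
            a • ((1:ℝ), (0 : EuclideanSpace ℝ (Fin p)), (0 : EuclideanSpace ℝ (Fin m))) +
            (((0:ℝ), y, (0 : EuclideanSpace ℝ (Fin m))) +
             ((0:ℝ), (0 : EuclideanSpace ℝ (Fin p)), z)) := by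
          simp [Prod.ext_iff]
        rw [hz, map_add, map_add, map_smul, smul_eq_mul, hμdef]
        rfl
      have hineq : ∀ x ∈ X, ∀ u ∈ K, ∀ s : ℝ, 0 ≤ s →
          c < (f x - f xstar + s) * μ + (ψp (TA x - b) + ψm (g x + u)) := by
        intro x hx u hu s hs
        have := hCc _ ⟨x, hx, u, hu, s, hs, rfl⟩
        rwa [hdecomp] at this
      have hPceq : φ₀ (-ε, 0, 0) = -ε * μ := by
        rw [hdecomp]; simp
      have hcgt : -ε * μ < c := by rw [← hPceq]; exact hPc
      have hμnn : 0 ≤ μ := by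
        by_contra hneg; push_neg at hneg
        set D := ψp (TA xt - b) + ψm (g xt + 0) with hD
        set s0 : ℝ := max 0 ((c - D - (f xt - f xstar) * μ) / μ) with hs0def
        have hs0 : (0:ℝ) ≤ s0 := le_max_left _ _
        have hles := hineq xt hxtX 0 h0K s0 hs0
        have hs0' : (c - D - (f xt - f xstar) * μ) / μ ≤ s0 := le_max_right _ _
        have hmul : s0 * μ ≤ c - D - (f xt - f xstar) * μ := by
          rw [div_le_iff_of_neg hneg] at hs0'
          linarith
        nlinarith
      have hψmK : ∀ u ∈ K, 0 ≤ ψm u := by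
        intro u hu
        by_contra hneg; push_neg at hneg
        set D := (f xt - f xstar) * μ + (ψp (TA xt - b) + ψm (g xt)) with hD
        set t0 : ℝ := max 0 ((c - D) / ψm u) with ht0def
        have ht0 : (0:ℝ) ≤ t0 := le_max_left _ _
        have hles := hineq xt hxtX (t0 • u) (hKcone t0 ht0 u hu) 0 le_rfl
        have hsplit : ψm (g xt + t0 • u) = ψm (g xt) + t0 * ψm u := by
          rw [map_add, map_smul, smul_eq_mul]
        have ht0' : (c - D) / ψm u ≤ t0 := le_max_right _ _
        have hmul : t0 * ψm u ≤ c - D := by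
          rw [div_le_iff_of_neg hneg] at ht0'
          linarith
        rw [hsplit] at hles
        nlinarith
      have hψmgxt : ψm (g xt) ≤ 0 := by
        have h := hψmK _ (hKsub hxtg)
        have : ψm (-g xt) = -ψm (g xt) := map_neg _ _
        linarith [this ▸ h]
      have hμpos : 0 < μ := by
        rcases lt_or_eq_of_le hμnn with h | h
        · exact h
        · exfalso
          have hx0 := hineq xt hxtX 0 h0K 0 le_rfl
          rw [hxtA] at hx0
          simp only [sub_self, map_zero, add_zero, zero_add] at hx0
          rw [← h] at hx0
          simp only [mul_zero, zero_add] at hx0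
          have hc0 : 0 < c := by
            have := hcgt; rw [← h] at this; simpa using this
          linarith
      set wp := (InnerProductSpace.toDual ℝ (EuclideanSpace ℝ (Fin p))).symm ψp with hwp
      set wm := (InnerProductSpace.toDual ℝ (EuclideanSpace ℝ (Fin m))).symm ψm with hwm
      have hwpin : ∀ y, ⟪wp, y⟫ = ψp y := by
        intro y
        rw [hwp, ← InnerProductSpace.toDual_apply_apply,
          (InnerProductSpace.toDual ℝ _).apply_symm_apply]
      have hwmin : ∀ z, ⟪wm, z⟫ = ψm z := by
        intro z
        rw [hwm, ← InnerProductSpace.toDual_apply_apply,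
          (InnerProductSpace.toDual ℝ _).apply_symm_apply]
      refine ⟨μ⁻¹ • wp, μ⁻¹ • wm, ?_, ?_⟩
      · rw [hKstar]
        intro u hu
        rw [real_inner_smul_left, hwmin]
        exact mul_nonneg (by positivity) (hψmK u hu)
      · intro x hx
        have h := hineq x hx 0 h0K 0 le_rfl
        simp only [add_zero] at h
        have hgoal : ⟪μ⁻¹ • wp, TA x - b⟫ = μ⁻¹ * ψp (TA x - b) := by
          rw [real_inner_smul_left, hwpin]
        have hgoal2 : ⟪μ⁻¹ • wm, g x⟫ = μ⁻¹ * ψm (g x) := by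
          rw [real_inner_smul_left, hwmin]
        rw [hgoal, hgoal2]
        have hc1 : -ε * μ < (f x - f xstar) * μ + (ψp (TA x - b) + ψm (g x)) := by
          calc -ε * μ < c := hcgt
            _ < _ := by simpa using h
        have hinv : 0 < μ⁻¹ := by positivity
        have hc2 := mul_lt_mul_of_pos_right hc1 hinv
        have hl : -ε * μ * μ⁻¹ = -ε := by field_simp
        have hr : ((f x - f xstar) * μ + (ψp (TA x - b) + ψm (g x))) * μ⁻¹
            = (f x - f xstar) + (μ⁻¹ * ψp (TA x - b) + μ⁻¹ * ψm (g x)) := by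
          field_simp
        rw [hl, hr] at hc2
        linarith
    intro vstar lamstar hls hopt
    by_contra hcon; push_neg at hcon
    set ε := (f xstar - q vstar lamstar) / 2 with hεdef
    have hε : 0 < ε := by rw [hεdef]; linarith
    obtain ⟨vh, lamh, hlamh, hbig⟩ := key ε hε
    have h1 : f xstar - ε ≤ q vh lamh := by
      rw [hq vh lamh hlamh]
      apply le_csInf (hXne.image _)
      rintro r ⟨x, hx, rfl⟩
      simp only [hΦ]
      exact hbig x hx
    have h2 := hopt vh lamh hlamh
    rw [hεdef] at h1
    linarith
  -- Gmax facts
  have hGbdd : BddAbove {r : ℝ | ∃ x ∈ X, r = ‖gradient f x‖} := by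
    have hset : {r : ℝ | ∃ x ∈ X, r = ‖gradient f x‖} = (fun x => ‖gradient f x‖) '' X := by
      ext r
      constructor
      · rintro ⟨x, hx, rfl⟩; exact ⟨x, hx, rfl⟩
      · rintro ⟨x, hx, rfl⟩; exact ⟨x, hx, rfl⟩
    rw [hset]
    have hfd : ContinuousOn (fun x => fderiv ℝ f x) U :=
      hfC1.continuousOn_fderiv_of_isOpen hUopen le_rfl
    have hcont : ContinuousOn (fun x => ‖gradient f x‖) X := by
      have heq : (fun x : EuclideanSpace ℝ (Fin n) => ‖gradient f x‖) =
          fun x => ‖fderiv ℝ f x‖ := by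
        funext x
        rw [gradient]
        exact LinearIsometryEquiv.norm_map _ _
      rw [heq]
      exact continuous_norm.comp_continuousOn (hfd.mono hXU)
    exact (hXcpt.image_of_continuousOn hcont).bddAbove
  have hGxs : ‖gradient f xstar‖ ≤ Gmax := by
    rw [hGmax]
    exact le_csSup hGbdd ⟨xstar, hxs, rfl⟩
  have hG0 : 0 ≤ Gmax := le_trans (norm_nonneg _) hGxs
  have hadj : ∀ (v : EuclideanSpace ℝ (Fin p)) (x : EuclideanSpace ℝ (Fin n)),
      ⟪Matrix.toEuclideanLin A.transpose v, x⟫ = ⟪v, TA x⟫ := by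
    intro v x
    have h : A.transpose = A.conjTranspose := by
      rw [Matrix.conjTranspose]; ext i j; simp
    rw [h, Matrix.toEuclideanLin_conjTranspose_eq_adjoint]
    exact LinearMap.adjoint_inner_left _ _ _
  -- stationarity bound
  have hATbd : ∀ vstar lamstar, lamstar ∈ Kstar →
      (∀ v lam, lam ∈ Kstar → q v lam ≤ q vstar lamstar) →
      ‖Matrix.toEuclideanLin A.transpose vstar‖ ≤ Gmax + Cg * ‖lamstar‖ := by
    intro vstar lamstar hls hopt
    have hmin : ∀ x ∈ X, Φ xstar (vstar, lamstar) ≤ Φ x (vstar, lamstar) := by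
      intro x hx
      have h1 : Φ xstar (vstar, lamstar) ≤ f xstar := by
        rw [hΦ, hxsA]
        have hsl : (0:ℝ) ≤ ⟪lamstar, -g xstar⟫ := by
          rw [hKstar] at hls; exact hls _ hxsg
        rw [inner_neg_right] at hsl
        simp only [sub_self, inner_zero_right]
        linarith
      have h2 : f xstar ≤ q vstar lamstar := hsd vstar lamstar hls hopt
      have h3 := hqleΦ vstar lamstar hls x hx
      linarith
    have hXnhds : X ∈ nhds xstar := mem_interior_iff_mem_nhds.1 hxsint
    have hloc : IsLocalMin (fun x => Φ x (vstar, lamstar)) xstar :=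
      Filter.eventually_of_mem hXnhds hmin
    have hfd : HasFDerivAt f (fderiv ℝ f xstar) xstar :=
      ((hfC1.contDiffAt (hUopen.mem_nhds (hXU hxs))).differentiableAt one_ne_zero).hasFDerivAt
    have hgd : HasFDerivAt g (fderiv ℝ g xstar) xstar :=
      ((hgC1.contDiffAt (hUopen.mem_nhds (hXU hxs))).differentiableAt one_ne_zero).hasFDerivAt
    set TAc : EuclideanSpace ℝ (Fin n) →L[ℝ] EuclideanSpace ℝ (Fin p) :=
      LinearMap.toContinuousLinearMap TA with hTAcdef
    have hTAcapp : ∀ x, TAc x = TA x := fun x => rfl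
    have h1 : HasFDerivAt (fun x => ⟪vstar, TA x - b⟫)
        ((innerSL ℝ vstar).comp TAc) xstar := by
      have heqf : (fun x : EuclideanSpace ℝ (Fin n) => ⟪vstar, TA x - b⟫) =
          fun x => ((innerSL ℝ vstar).comp TAc) x - ⟪vstar, b⟫ := by
        funext x
        simp only [ContinuousLinearMap.comp_apply, innerSL_apply_apply, hTAcapp]
        rw [inner_sub_right]
      rw [heqf]
      exact (((innerSL ℝ vstar).comp TAc).hasFDerivAt).sub_const _
    have h2 : HasFDerivAt (fun x => ⟪lamstar, g x⟫)
        ((innerSL ℝ lamstar).comp (fderiv ℝ g xstar)) xstar :=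
      ((innerSL ℝ lamstar).hasFDerivAt).comp xstar hgd
    have hF : HasFDerivAt (fun x => Φ x (vstar, lamstar))
        (fderiv ℝ f xstar + (innerSL ℝ vstar).comp TAc +
          (innerSL ℝ lamstar).comp (fderiv ℝ g xstar)) xstar := by
      have hfun : (fun x => Φ x (vstar, lamstar)) =
          fun x => (f x + ⟪vstar, TA x - b⟫) + ⟪lamstar, g x⟫ := by
        funext x; rw [hΦ]
      rw [hfun]
      exact (hfd.add h1).add h2
    have hD0 := hloc.hasFDerivAt_eq_zero hF
    have heval : ∀ h, ⟪gradient f xstar, h⟫ + ⟪vstar, TA h⟫ +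
        ⟪lamstar, fderiv ℝ g xstar h⟫ = 0 := by
      intro h
      have hev := congrArg (fun L : EuclideanSpace ℝ (Fin n) →L[ℝ] ℝ => L h) hD0
      simp only [ContinuousLinearMap.add_apply, ContinuousLinearMap.comp_apply,
        ContinuousLinearMap.zero_apply, innerSL_apply_apply] at hev
      have hgr : ⟪gradient f xstar, h⟫ = fderiv ℝ f xstar h := by
        rw [gradient, ← InnerProductSpace.toDual_apply_apply,
          (InnerProductSpace.toDual ℝ _).apply_symm_apply]
      rw [hgr, ← hTAcapp h]
      exact hev
    have hDg : ∀ h, ‖fderiv ℝ g xstar h‖ ≤ Cg * ‖h‖ := by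
      have hlip : LipschitzOnWith Cg.toNNReal g X := by
        apply LipschitzOnWith.of_dist_le_mul
        intro x hx y hy
        rw [dist_eq_norm, dist_eq_norm]
        have := hCgLip x hx y hy
        rwa [Real.coe_toNNReal _ hCg.le]
      have hn := hgd.le_of_lipschitzOn hXnhds hlip
      rw [Real.coe_toNNReal _ hCg.le] at hn
      intro h
      calc ‖fderiv ℝ g xstar h‖ ≤ ‖fderiv ℝ g xstar‖ * ‖h‖ :=
            ContinuousLinearMap.le_opNorm _ _
        _ ≤ Cg * ‖h‖ := mul_le_mul_of_nonneg_right hn (norm_nonneg _)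
    set w := Matrix.toEuclideanLin A.transpose vstar with hw
    have hkey := heval w
    rw [← hadj vstar w] at hkey
    rw [real_inner_self_eq_norm_sq] at hkey
    have hcs1 : |⟪gradient f xstar, w⟫| ≤ ‖gradient f xstar‖ * ‖w‖ :=
      abs_real_inner_le_norm _ _
    have hcs2 : |⟪lamstar, fderiv ℝ g xstar w⟫| ≤ ‖lamstar‖ * (Cg * ‖w‖) :=
      le_trans (abs_real_inner_le_norm _ _)
        (mul_le_mul_of_nonneg_left (hDg w) (norm_nonneg _))
    have e1 : -⟪gradient f xstar, w⟫ ≤ ‖gradient f xstar‖ * ‖w‖ := by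
      have := (abs_le.1 hcs1).1; linarith
    have e2 : -⟪lamstar, fderiv ℝ g xstar w⟫ ≤ ‖lamstar‖ * (Cg * ‖w‖) := by
      have := (abs_le.1 hcs2).1; linarith
    have e3 : ‖w‖^2 ≤ (Gmax + Cg * ‖lamstar‖) * ‖w‖ := by
      nlinarith [mul_le_mul_of_nonneg_right hGxs (norm_nonneg w), norm_nonneg w]
    rcases eq_or_ne w 0 with h0 | h0
    · rw [h0]
      simp only [norm_zero]
      have : 0 ≤ Cg * ‖lamstar‖ := mul_nonneg hCg.le (norm_nonneg _)
      linarith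
    · have hnw : 0 < ‖w‖ := norm_pos_iff.2 h0
      nlinarith
  -- σmin facts
  have hσbdd : BddBelow {s : ℝ | ∃ v : EuclideanSpace ℝ (Fin p),
      ‖v‖ = 1 ∧ s = ‖Matrix.toEuclideanLin A.transpose v‖} := by
    refine ⟨0, ?_⟩; rintro s ⟨v, _, rfl⟩; positivity
  have hσle : ∀ v : EuclideanSpace ℝ (Fin p), ‖v‖ = 1 →
      σmin ≤ ‖Matrix.toEuclideanLin A.transpose v‖ := by
    intro v hv
    rw [hσmin]
    exact csInf_le hσbdd ⟨v, hv, rfl⟩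
  have hσmul : ∀ vstar : EuclideanSpace ℝ (Fin p),
      σmin * ‖vstar‖ ≤ ‖Matrix.toEuclideanLin A.transpose vstar‖ := by
    intro vstar
    rcases eq_or_ne vstar 0 with rfl | hv0
    · simp
    · have hnv : (0:ℝ) < ‖vstar‖ := norm_pos_iff.2 hv0
      have h1 : ‖‖vstar‖⁻¹ • vstar‖ = 1 := by
        rw [norm_smul, norm_inv, norm_norm, inv_mul_cancel₀ hnv.ne']
      have := hσle _ h1
      rw [map_smul, norm_smul, norm_inv, norm_norm] at this
      calc σmin * ‖vstar‖ ≤ (‖vstar‖⁻¹ * ‖Matrix.toEuclideanLin A.transpose vstar‖) * ‖vstar‖ :=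
            mul_le_mul_of_nonneg_right this hnv.le
        _ = _ := by field_simp
  -- the main per-pair bound
  have hvbd : ∀ vstar lamstar, lamstar ∈ Kstar →
      (∀ v lam, lam ∈ Kstar → q v lam ≤ q vstar lamstar) →
      ∀ v lam, lam ∈ Kstar →
        ‖vstar‖ ≤ (1 / σmin) * (Gmax + Cg * (f xt - q v lam) / rstar) := by
    intro vstar lamstar hls hopt v lam hlam
    have hM : ‖Matrix.toEuclideanLin A.transpose vstar‖ ≤
        Gmax + Cg * (f xt - q v lam) / rstar := by
      have h1 := hATbd vstar lamstar hls hopt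
      have h2 := hlambd vstar lamstar hls hopt v lam hlam
      have h3 : Cg * ‖lamstar‖ ≤ Cg * ((f xt - q v lam) / rstar) :=
        mul_le_mul_of_nonneg_left h2 hCg.le
      rw [mul_div_assoc]
      linarith
    rcases Nat.eq_zero_or_pos p with hp | hp
    · subst hp
      have hv0 : vstar = 0 := Subsingleton.elim _ _
      have hσ0 : σmin = 0 := by
        rw [hσmin]
        convert Real.sInf_empty using 2
        rw [Set.eq_empty_iff_forall_notMem]
        rintro s ⟨v, hv, _⟩
        have : v = 0 := Subsingleton.elim _ _
        rw [this] at hv; simp at hv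
      rw [hv0, hσ0]; simp
    · have hσpos : 0 < σmin := by
        have hrk : A.transpose.rank =
            Module.finrank ℝ (LinearMap.range (Matrix.toEuclideanLin A.transpose)) := by
          rw [Matrix.rank_eq_finrank_range_toLin A.transpose
            (PiLp.basisFun 2 ℝ (Fin n)) (PiLp.basisFun 2 ℝ (Fin p))]
          rfl
        have hker : LinearMap.ker (Matrix.toEuclideanLin A.transpose) = ⊥ := by
          have h1 := LinearMap.finrank_range_add_finrank_ker (Matrix.toEuclideanLin A.transpose)
          have h2 : Module.finrank ℝ (EuclideanSpace ℝ (Fin p)) = p := by simp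
          have h3 : A.transpose.rank = p := by rw [Matrix.rank_transpose, hrank]
          have h4 : Module.finrank ℝ
              (LinearMap.ker (Matrix.toEuclideanLin A.transpose)) = 0 := by
            rw [h2, ← hrk, h3] at h1; omega
          exact Submodule.finrank_eq_zero.1 h4
        have hinj : Function.Injective (Matrix.toEuclideanLin A.transpose) :=
          LinearMap.ker_eq_bot.1 hker
        have hset : {s : ℝ | ∃ v : EuclideanSpace ℝ (Fin p),
            ‖v‖ = 1 ∧ s = ‖Matrix.toEuclideanLin A.transpose v‖} =
            (fun v => ‖Matrix.toEuclideanLin A.transpose v‖) ''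
              Metric.sphere (0 : EuclideanSpace ℝ (Fin p)) 1 := by
          ext r
          constructor
          · rintro ⟨w', hw', rfl⟩; exact ⟨w', by simpa using hw', rfl⟩
          · rintro ⟨w', hw', rfl⟩; exact ⟨w', by simpa using hw', rfl⟩
        have hcpt := isCompact_sphere (0 : EuclideanSpace ℝ (Fin p)) 1
        have hne : (Metric.sphere (0 : EuclideanSpace ℝ (Fin p)) 1).Nonempty :=
          ⟨EuclideanSpace.single ⟨0, hp⟩ 1, by simp⟩
        have hcont : ContinuousOn
            (fun v' => ‖Matrix.toEuclideanLin A.transpose v'‖)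
            (Metric.sphere (0 : EuclideanSpace ℝ (Fin p)) 1) :=
          ((LinearMap.continuous_of_finiteDimensional
            (Matrix.toEuclideanLin A.transpose)).norm).continuousOn
        have hmemσ : σmin ∈ (fun v' => ‖Matrix.toEuclideanLin A.transpose v'‖) ''
            Metric.sphere (0 : EuclideanSpace ℝ (Fin p)) 1 := by
          rw [hσmin, hset]
          exact (hcpt.image_of_continuousOn hcont).sInf_mem (hne.image _)
        obtain ⟨v0, hv0s, heq⟩ := hmemσ
        have hv0n : ‖v0‖ = 1 := by simpa using hv0s
        have hv0ne : v0 ≠ 0 := by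
          intro h; rw [h] at hv0n; simp at hv0n
        have hATne : Matrix.toEuclideanLin A.transpose v0 ≠ 0 := by
          intro h
          exact hv0ne (hinj (by rw [h, map_zero]))
        rw [← heq]
        exact norm_pos_iff.2 hATne
      have h1 := le_trans (hσmul vstar) hM
      have h2 : ‖vstar‖ ≤ (Gmax + Cg * (f xt - q v lam) / rstar) / σmin :=
        (le_div_iff₀ hσpos).2 (by linarith)
      rw [one_div, mul_comm]
      rwa [div_eq_mul_inv] at h2
  refine ⟨fun vstar lamstar hls hopt v lam hlam _ => hvbd vstar lamstar hls hopt v lam hlam, ?_⟩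
  -- boundedness
  rw [isBounded_iff_forall_norm_le]
  refine ⟨max ((1 / σmin) * (Gmax + Cg * (f xt - q 0 0) / rstar)) ((f xt - q 0 0) / rstar), ?_⟩
  rintro ⟨v1, l1⟩ ⟨hl1, hopt⟩
  have b1 := hvbd v1 l1 hl1 hopt 0 0 h0Kstar
  have b2 := hlambd v1 l1 hl1 hopt 0 0 h0Kstar
  rw [Prod.norm_def]
  exact max_le_max b1 b2
end

section
/- Let Y = ℝ^p × K*, fix B > 0, and set Ŷ = Y ∩ {y ∈ ℝ^{p+m} : ‖y‖ ≤ B}. Let Z* be the set of saddle points of Φ over X × Y and let Ẑ* be the set of saddle points of Φ over X × Ŷ. Assume there exists (x°, y°) ∈ Z* with ‖y°‖ < B. Then: (1) Ẑ* = (X × Ŷ) ∩ Z*, and this set is nonempty; (2) {x : ∃ y, (x,y) ∈ Ẑ*} = {x : ∃ y, (x,y) ∈ Z*} and {y : ∃ x, (x,y) ∈ Ẑ*} = {y : ∃ x, (x,y) ∈ Z*} ∩ Ŷ; (3) the feasible set {x ∈ X : Ax = b, g(x) ∈ -K} is nonempty and Φ(x̂, ŷ) = f* := min{ f(x) : x ∈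 X, Ax = b, g(x) ∈ -K } for every (x̂, ŷ) ∈ Ẑ*. -/
open scoped RealInnerProductSpace

/-- For the conic Lagrangian coupling `Φ` of the NCP, with dual domain
`Y = ℝ^p × K*`, `B > 0`, and restricted dual domain `Ŷ = Y ∩ {‖y‖ ≤ B}` (Euclidean norm
on the pair), if `Z*` (saddle points over `X × Y`) contains a point `(x°,y°)` with
`‖y°‖ < B`, then: (1) `Ẑ* = (X × Ŷ) ∩ Z*` and it is nonempty; (2) the primal projections
of `Ẑ*` and `Z*` coincide, and the dual projection of `Ẑ*` equals that of `Z*`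
intersected with `Ŷ`; (3) the feasible set is nonempty and `Φ(x̂,ŷ) = f*` (the attained
minimum of `f` over the feasible set) for every `(x̂,ŷ) ∈ Ẑ*`. -/
theorem stmt_2 {n m p : ℕ} (hm : 1 ≤ m)
    (X : Set (EuclideanSpace ℝ (Fin n)))
    (K : Set (EuclideanSpace ℝ (Fin m)))
    (A : Matrix (Fin p) (Fin n) ℝ) (b : EuclideanSpace ℝ (Fin p))
    (f : EuclideanSpace ℝ (Fin n) → ℝ)
    (g : EuclideanSpace ℝ (Fin n) → EuclideanSpace ℝ (Fin m))
    (hXne : X.Nonempty) (hXcpt : IsCompact X) (hXconv : Convex ℝ X)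
    (hKclosed : IsClosed K) (hKconv : Convex ℝ K)
    (hKcone : ∀ c : ℝ, 0 ≤ c → ∀ u ∈ K, c • u ∈ K)
    (hKpointed : ∀ u ∈ K, -u ∈ K → u = 0)
    (hKint : (interior K).Nonempty)
    (hfconv : ConvexOn ℝ Set.univ f) (hfcont : Continuous f)
    (hgcont : Continuous g)
    (hgKconv : ∀ x ∈ X, ∀ x' ∈ X, ∀ t : ℝ, 0 ≤ t → t ≤ 1 →
      t • g x + (1 - t) • g x' - g (t • x + (1 - t) • x') ∈ K)
    (Kstar : Set (EuclideanSpace ℝ (Fin m)))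
    (hKstar : Kstar = {w | ∀ u ∈ K, 0 ≤ ⟪w, u⟫})
    (Φ : EuclideanSpace ℝ (Fin n) → EuclideanSpace ℝ (Fin p) × EuclideanSpace ℝ (Fin m) → ℝ)
    (hΦ : ∀ x v lam, Φ x (v, lam) =
      f x + ⟪v, Matrix.toEuclideanLin A x - b⟫ + ⟪lam, g x⟫)
    -- dual domains
    (B : ℝ) (hB : 0 < B)
    (Y : Set (EuclideanSpace ℝ (Fin p) × EuclideanSpace ℝ (Fin m)))
    (hY : Y = {y | y.2 ∈ Kstar})
    (Yhat : Set (EuclideanSpace ℝ (Fin p) × EuclideanSpace ℝ (Fin m)))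
    (hYhat : Yhat = Y ∩ {y | Real.sqrt (‖y.1‖ ^ 2 + ‖y.2‖ ^ 2) ≤ B})
    -- saddle sets
    (Zstar : Set (EuclideanSpace ℝ (Fin n) × (EuclideanSpace ℝ (Fin p) × EuclideanSpace ℝ (Fin m))))
    (hZstar : Zstar = {z | z.1 ∈ X ∧ z.2 ∈ Y ∧
      ∀ x ∈ X, ∀ y ∈ Y, Φ z.1 y ≤ Φ z.1 z.2 ∧ Φ z.1 z.2 ≤ Φ x z.2})
    (Zhatstar : Set (EuclideanSpace ℝ (Fin n) × (EuclideanSpace ℝ (Fin p) × EuclideanSpace ℝ (Fin m))))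
    (hZhatstar : Zhatstar = {z | z.1 ∈ X ∧ z.2 ∈ Yhat ∧
      ∀ x ∈ X, ∀ y ∈ Yhat, Φ z.1 y ≤ Φ z.1 z.2 ∧ Φ z.1 z.2 ≤ Φ x z.2})
    -- there is a saddle point whose dual part lies strictly inside the ball
    (hsaddle : ∃ z ∈ Zstar, Real.sqrt (‖z.2.1‖ ^ 2 + ‖z.2.2‖ ^ 2) < B)
    -- feasible set
    (Feas : Set (EuclideanSpace ℝ (Fin n)))
    (hFeas : Feas = {x ∈ X | Matrix.toEuclideanLin A x = b ∧ -g x ∈ K}) :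
    (Zhatstar = (X ×ˢ Yhat) ∩ Zstar ∧ Zhatstar.Nonempty) ∧
    ({x | ∃ y, (x, y) ∈ Zhatstar} = {x | ∃ y, (x, y) ∈ Zstar} ∧
      {y | ∃ x, (x, y) ∈ Zhatstar} = {y | ∃ x, (x, y) ∈ Zstar} ∩ Yhat) ∧
    (Feas.Nonempty ∧ ∀ z ∈ Zhatstar, IsLeast (f '' Feas) (Φ z.1 z.2)) := by
  classical
  -- basic cone facts
  obtain ⟨u₀, hu₀⟩ := hKint
  have hu₀K : u₀ ∈ K := interior_subset hu₀
  have hK0 : (0 : EuclideanSpace ℝ (Fin m)) ∈ K := by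
    simpa using hKcone 0 le_rfl u₀ hu₀K
  have hKadd : ∀ u ∈ K, ∀ w ∈ K, u + w ∈ K := by
    intro u hu w hw
    have h2 : ((1:ℝ)/2) • u + ((1:ℝ)/2) • w ∈ K := by
      have := hKconv hu hw (by norm_num : (0:ℝ) ≤ 1/2) (by norm_num : (0:ℝ) ≤ 1/2)
        (by norm_num)
      exact this
    have h3 := hKcone 2 (by norm_num) _ h2
    have h4 : (2:ℝ) • (((1:ℝ)/2) • u + ((1:ℝ)/2) • w) = u + w := by
      rw [smul_add, smul_smul, smul_smul]; norm_num
    rwa [h4] at h3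
  have hKs0 : (0 : EuclideanSpace ℝ (Fin m)) ∈ Kstar := by
    rw [hKstar]; intro u hu; simp
  have hKsadd : ∀ a ∈ Kstar, ∀ b ∈ Kstar, a + b ∈ Kstar := by
    simp only [hKstar, Set.mem_setOf_eq]
    intro a ha b hb u hu
    rw [inner_add_left]; exact add_nonneg (ha u hu) (hb u hu)
  -- bipolar
  have hKK : ∀ w : EuclideanSpace ℝ (Fin m), (∀ μ ∈ Kstar, 0 ≤ ⟪μ, w⟫) → w ∈ K := by
    intro w hw
    let Kc : ProperCone ℝ (EuclideanSpace ℝ (Fin m)) :=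
      { carrier := K
        add_mem' := fun {u v} hu hv => hKadd u hu v hv
        zero_mem' := hK0
        smul_mem' := fun c u hu => (hKcone c c.2 u hu : _)
        isClosed' := hKclosed }
    by_contra hwK
    obtain ⟨y, hy, hwy⟩ := Kc.hyperplane_separation' (x₀ := w) hwK
    have h := hw y (by rw [hKstar]; intro u hu; rw [real_inner_comm]; exact hy u hu)
    rw [real_inner_comm] at h
    linarith
  -- unpack the given saddle point
  obtain ⟨z0, hz0, hz0B⟩ := hsaddle
  obtain ⟨x0, y0⟩ := z0
  obtain ⟨v0, l0⟩ := y0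
  simp only [hZstar, Set.mem_setOf_eq] at hz0
  obtain ⟨hx0X, hy0Y, hz0sad⟩ := hz0
  have hl0K : l0 ∈ Kstar := by
    rw [hY, Set.mem_setOf_eq] at hy0Y; exact hy0Y
  have hy0Y' : ((v0, l0) : EuclideanSpace ℝ (Fin p) × EuclideanSpace ℝ (Fin m)) ∈ Y := by
    rw [hY]; exact hl0K
  have hYhatY : Yhat ⊆ Y := by rw [hYhat]; exact Set.inter_subset_left
  have hy0hat : ((v0, l0) : EuclideanSpace ℝ (Fin p) × EuclideanSpace ℝ (Fin m)) ∈ Yhat := by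
    rw [hYhat]
    exact ⟨hy0Y', le_of_lt hz0B⟩
  have hz0Z : ((x0, (v0, l0)) :
      EuclideanSpace ℝ (Fin n) × (EuclideanSpace ℝ (Fin p) × EuclideanSpace ℝ (Fin m)))
      ∈ Zstar := by
    simp only [hZstar, Set.mem_setOf_eq]
    exact ⟨hx0X, hy0Y', hz0sad⟩
  -- key feasibility/optimality lemma for saddle points over the full Y
  have key : ∀ x ∈ X, ∀ v l, l ∈ Kstar →
      (∀ y ∈ Y, Φ x y ≤ Φ x (v, l)) → (∀ x' ∈ X, Φ x (v, l) ≤ Φ x' (v, l)) →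
      x ∈ Feas ∧ Φ x (v, l) = f x ∧ ∀ x' ∈ Feas, Φ x (v, l) ≤ f x' := by
    intro x hx v l hl hmax hmin
    have hvle : ∀ v' : EuclideanSpace ℝ (Fin p),
        ⟪v', Matrix.toEuclideanLin A x - b⟫ ≤ 0 := by
      intro v'
      have h := hmax (v + v', l) (by rw [hY]; exact hl)
      simp only [hΦ, inner_add_left] at h
      linarith
    have hAxb : Matrix.toEuclideanLin A x = b := by
      have h0 := hvle (Matrix.toEuclideanLin A x - b)
      have h1 : (0:ℝ) ≤ ⟪Matrix.toEuclideanLin A x - b, Matrix.toEuclideanLin A x - b⟫ :=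
        real_inner_self_nonneg
      have h2 : Matrix.toEuclideanLin A x - b = 0 :=
        inner_self_eq_zero.mp (le_antisymm h0 h1)
      rwa [sub_eq_zero] at h2
    have hgmem : -g x ∈ K := by
      apply hKK
      intro μ hμ
      have h := hmax (v, l + μ) (by rw [hY]; exact hKsadd l hl μ hμ)
      simp only [hΦ, inner_add_left] at h
      rw [inner_neg_right]
      linarith
    have hlg0 : ⟪l, g x⟫ = 0 := by
      have h1 : (0:ℝ) ≤ ⟪l, -g x⟫ := by
        rw [hKstar] at hl; exact hl _ hgmem
      rw [inner_neg_right] at h1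
      have h := hmax (v, 0) (by rw [hY]; exact hKs0)
      simp only [hΦ, inner_zero_left] at h
      linarith
    have hΦf : Φ x (v, l) = f x := by
      rw [hΦ, hAxb, sub_self, inner_zero_right, hlg0]; ring
    have hfeasx : x ∈ Feas := by
      rw [hFeas]; exact ⟨hx, hAxb, hgmem⟩
    refine ⟨hfeasx, hΦf, ?_⟩
    intro x' hx'
    rw [hFeas] at hx'
    obtain ⟨hx'X, hAx', hgx'⟩ := hx'
    have h := hmin x' hx'X
    have hlg' : ⟪l, g x'⟫ ≤ 0 := by
      have h1 : (0:ℝ) ≤ ⟪l, -g x'⟫ := by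
        rw [hKstar] at hl; exact hl _ hgx'
      rw [inner_neg_right] at h1; linarith
    have h2 : Φ x' (v, l) = f x' + ⟪l, g x'⟫ := by
      rw [hΦ, hAx', sub_self, inner_zero_right]; ring
    linarith
  -- rectangle property of saddle points
  have rect : ∀ z1 ∈ Zstar, ∀ z2 ∈ Zstar, (z1.1, z2.2) ∈ Zstar := by
    intro z1 hz1 z2 hz2
    simp only [hZstar, Set.mem_setOf_eq] at hz1 hz2 ⊢
    obtain ⟨h1X, h1Y, h1s⟩ := hz1
    obtain ⟨h2X, h2Y, h2s⟩ := hz2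
    have e1 := h1s z2.1 h2X z2.2 h2Y
    have e2 := h2s z1.1 h1X z1.2 h1Y
    have heq1 : Φ z1.1 z2.2 = Φ z1.1 z1.2 :=
      le_antisymm e1.1 (by linarith [e1.2, e2.1, e2.2])
    have heq2 : Φ z2.1 z2.2 = Φ z1.1 z2.2 :=
      le_antisymm e2.2 (by linarith [e1.1, e1.2, e2.1])
    refine ⟨h1X, h2Y, ?_⟩
    intro x hx y hy
    constructor
    · calc Φ z1.1 y ≤ Φ z1.1 z1.2 := (h1s x hx y hy).1
        _ = Φ z1.1 z2.2 := heq1.symm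
    · calc Φ z1.1 z2.2 = Φ z2.1 z2.2 := heq2.symm
        _ ≤ Φ x z2.2 := (h2s x hx y hy).2
  -- Zhatstar ⊆ Zstar (the regularization argument)
  have hsub : Zhatstar ⊆ Zstar := by
    intro z hz
    obtain ⟨xh, yh⟩ := z
    obtain ⟨vh, lh⟩ := yh
    simp only [hZhatstar, Set.mem_setOf_eq] at hz
    obtain ⟨hxX, hyhat, hsad⟩ := hz
    have hyY : ((vh, lh) : EuclideanSpace ℝ (Fin p) × EuclideanSpace ℝ (Fin m)) ∈ Y :=
      hYhatY hyhat
    have c1 : Φ xh (v0, l0) ≤ Φ xh (vh, lh) := (hsad x0 hx0X (v0, l0) hy0hat).1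
    have c2 : Φ xh (vh, lh) ≤ Φ x0 (vh, lh) := (hsad x0 hx0X (v0, l0) hy0hat).2
    have c3 : Φ x0 (vh, lh) ≤ Φ x0 (v0, l0) := (hz0sad xh hxX (vh, lh) hyY).1
    have c4 : Φ x0 (v0, l0) ≤ Φ xh (v0, l0) := (hz0sad xh hxX (vh, lh) hyY).2
    have heq : Φ xh (v0, l0) = Φ xh (vh, lh) := le_antisymm c1 (by linarith)
    simp only [hZstar, Set.mem_setOf_eq]
    refine ⟨hxX, hyY, ?_⟩
    intro x hx y hy
    refine ⟨?_, (hsad x hx (v0, l0) hy0hat).2⟩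
    obtain ⟨v, l⟩ := y
    have hlK : l ∈ Kstar := by rw [hY, Set.mem_setOf_eq] at hy; exact hy
    -- find t ∈ (0,1] with the perturbed point inside the ball
    have hcont : Continuous (fun t : ℝ =>
        Real.sqrt (‖v0 + t • (v - v0)‖ ^ 2 + ‖l0 + t • (l - l0)‖ ^ 2)) := by
      fun_prop
    have hopen : IsOpen {t : ℝ | Real.sqrt (‖v0 + t • (v - v0)‖ ^ 2 +
        ‖l0 + t • (l - l0)‖ ^ 2) < B} := isOpen_lt hcont continuous_const
    have h00 : (0:ℝ) ∈ {t : ℝ | Real.sqrt (‖v0 + t • (v - v0)‖ ^ 2 +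
        ‖l0 + t • (l - l0)‖ ^ 2) < B} := by
      simp only [Set.mem_setOf_eq, zero_smul, add_zero]
      exact hz0B
    obtain ⟨ε, hε, hball⟩ := Metric.isOpen_iff.mp hopen 0 h00
    set t : ℝ := min (ε / 2) 1 with ht
    have ht0 : 0 < t := lt_min (half_pos hε) one_pos
    have ht1 : t ≤ 1 := min_le_right _ _
    have htball : t ∈ Metric.ball (0:ℝ) ε := by
      rw [Metric.mem_ball, Real.dist_eq, sub_zero, abs_of_pos ht0]
      calc t ≤ ε / 2 := min_le_left _ _
        _ < ε := by linarith
    have htS := hball htball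
    simp only [Set.mem_setOf_eq] at htS
    have hytY : ((v0 + t • (v - v0), l0 + t • (l - l0)) :
        EuclideanSpace ℝ (Fin p) × EuclideanSpace ℝ (Fin m)) ∈ Yhat := by
      rw [hYhat]
      constructor
      · rw [hY, Set.mem_setOf_eq]
        show l0 + t • (l - l0) ∈ Kstar
        rw [hKstar, Set.mem_setOf_eq]
        intro u hu
        have ha : (0:ℝ) ≤ ⟪l0, u⟫ := by rw [hKstar] at hl0K; exact hl0K u hu
        have hb : (0:ℝ) ≤ ⟪l, u⟫ := by rw [hKstar] at hlK; exact hlK u hu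
        have hexp : ⟪l0 + t • (l - l0), u⟫ = (1 - t) * ⟪l0, u⟫ + t * ⟪l, u⟫ := by
          rw [inner_add_left, real_inner_smul_left, inner_sub_left]; ring
        rw [hexp]
        have h1t : (0:ℝ) ≤ 1 - t := by linarith
        exact add_nonneg (mul_nonneg h1t ha) (mul_nonneg ht0.le hb)
      · exact le_of_lt htS
    have haff : Φ xh (v0 + t • (v - v0), l0 + t • (l - l0))
        = Φ xh (v0, l0) + t * (Φ xh (v, l) - Φ xh (v0, l0)) := by
      simp only [hΦ, inner_add_left, inner_sub_left, real_inner_smul_left]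
      ring
    have hle := (hsad xh hxX _ hytY).1
    rw [haff, ← heq] at hle
    rw [← heq]
    by_contra hcon
    push_neg at hcon
    have : (0:ℝ) < t * (Φ xh (v, l) - Φ xh (v0, l0)) :=
      mul_pos ht0 (by linarith)
    linarith
  -- (X ×ˢ Yhat) ∩ Zstar ⊆ Zhatstar
  have hsup : (X ×ˢ Yhat) ∩ Zstar ⊆ Zhatstar := by
    rintro ⟨x, y⟩ ⟨⟨hxX, hyY⟩, hzZ⟩
    simp only [hZstar, Set.mem_setOf_eq] at hzZ
    simp only [hZhatstar, Set.mem_setOf_eq]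
    exact ⟨hxX, hyY, fun x' hx' y' hy' => hzZ.2.2 x' hx' y' (hYhatY hy')⟩
  have hEq : Zhatstar = (X ×ˢ Yhat) ∩ Zstar := by
    apply Set.Subset.antisymm
    · intro z hz
      have hzZ := hsub hz
      simp only [hZhatstar, Set.mem_setOf_eq] at hz
      exact ⟨Set.mk_mem_prod hz.1 hz.2.1, hzZ⟩
    · exact hsup
  have hz0hat : ((x0, (v0, l0)) :
      EuclideanSpace ℝ (Fin n) × (EuclideanSpace ℝ (Fin p) × EuclideanSpace ℝ (Fin m)))
      ∈ Zhatstar := hsup ⟨Set.mk_mem_prod hx0X hy0hat, hz0Z⟩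
  -- key, packaged for members of Zstar
  have key' : ∀ z ∈ Zstar,
      z.1 ∈ Feas ∧ Φ z.1 z.2 = f z.1 ∧ ∀ x' ∈ Feas, Φ z.1 z.2 ≤ f x' := by
    rintro ⟨x, v, l⟩ hz
    simp only [hZstar, Set.mem_setOf_eq] at hz
    obtain ⟨hxX, hyY, hsad⟩ := hz
    have hlK : l ∈ Kstar := by rw [hY, Set.mem_setOf_eq] at hyY; exact hyY
    exact key x hxX v l hlK (fun y hy => (hsad x hxX y hy).1)
      (fun x' hx' => (hsad x' hx' (v, l) hyY).2)
  refine ⟨⟨hEq, ⟨_, hz0hat⟩⟩, ⟨?_, ?_⟩, ⟨x0, (key' _ hz0Z).1⟩, ?_⟩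
  · -- primal projections coincide
    ext x
    simp only [Set.mem_setOf_eq]
    constructor
    · rintro ⟨y, hy⟩; exact ⟨y, hsub hy⟩
    · rintro ⟨y, hy⟩
      have hxX : x ∈ X := by
        have := hy; simp only [hZstar, Set.mem_setOf_eq] at this; exact this.1
      exact ⟨(v0, l0), hsup ⟨Set.mk_mem_prod hxX hy0hat,
        rect (x, y) hy (x0, (v0, l0)) hz0Z⟩⟩
  · -- dual projections
    ext y
    simp only [Set.mem_setOf_eq, Set.mem_inter_iff]
    constructor
    · rintro ⟨x, hxy⟩
      refine ⟨⟨x, hsub hxy⟩, ?_⟩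
      simp only [hZhatstar, Set.mem_setOf_eq] at hxy
      exact hxy.2.1
    · rintro ⟨⟨x, hxy⟩, hyYhat⟩
      have hxX : x ∈ X := by
        have := hxy; simp only [hZstar, Set.mem_setOf_eq] at this; exact this.1
      exact ⟨x, hsup ⟨Set.mk_mem_prod hxX hyYhat, hxy⟩⟩
  · -- optimality
    intro z hz
    have hzZ := hsub hz
    obtain ⟨hfeas, hΦeq, hmin⟩ := key' z hzZ
    refine ⟨⟨z.1, hfeas, hΦeq.symm⟩, ?_⟩
    rintro a ⟨x', hx', rfl⟩
    exact hmin x' hx'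
end

section
/- Let Γ > 0 and let (γ_k)_{k ≥ 0} be a sequence of real numbers with γ_0 ≥ Γ²/9 and γ_{k+1} ≥ γ_k + Γ·√(γ_k) for all k ≥ 0. Then γ_k ≥ (Γ²/9)·k² for all k ≥ 0. -/
/-! Induct on `γ k ≥ (c k)²` with `c = Γ/3`. Since `x ↦ x + Γ √x` is monotone,
`γ (k+1) ≥ (c k)² + 3c · c k`, which is at least `(c (k+1))²` once `k ≥ 1`; the step from
`k = 0` uses `γ 1 ≥ γ 0 ≥ c²` instead. -/

open Real

lemma monotone_add_mul_sqrt {a : ℝ} (ha : 0 ≤ a) : Monotone fun x : ℝ => x + a * √x :=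
  fun _ _ hxy => add_le_add hxy (mul_le_mul_of_nonneg_left (sqrt_le_sqrt hxy) ha)

lemma sq_mul_succ_le_of_add_mul_sqrt_le {c : ℝ} (hc : 0 ≤ c) {γ : ℕ → ℝ} (h0 : c ^ 2 ≤ γ 0)
    (hrec : ∀ k, γ k + 3 * c * √(γ k) ≤ γ (k + 1)) (m : ℕ) :
    (c * (m + 1 : ℕ)) ^ 2 ≤ γ (m + 1) := by
  induction m with
  | zero =>
    have : 0 ≤ 3 * c * √(γ 0) := by positivity
    simpa using h0.trans (by linarith [hrec 0])
  | succ m ih =>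
    set n : ℝ := ((m + 1 : ℕ) : ℝ)
    have hn : 1 ≤ n := by simp [n]
    have hsqrt : √((c * n) ^ 2) = c * n := sqrt_sq (by positivity)
    calc (c * ((m + 1 + 1 : ℕ) : ℝ)) ^ 2 = (c * (n + 1)) ^ 2 := by push_cast [n]; ring
      _ ≤ (c * n) ^ 2 + 3 * c * (c * n) := by nlinarith [sq_nonneg c]
      _ = (c * n) ^ 2 + 3 * c * √((c * n) ^ 2) := by rw [hsqrt]
      _ ≤ γ (m + 1) + 3 * c * √(γ (m + 1)) := monotone_add_mul_sqrt (by positivity) ih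
      _ ≤ γ (m + 1 + 1) := hrec (m + 1)

lemma sq_mul_le_of_add_mul_sqrt_le {c : ℝ} (hc : 0 ≤ c) {γ : ℕ → ℝ} (h0 : c ^ 2 ≤ γ 0)
    (hrec : ∀ k, γ k + 3 * c * √(γ k) ≤ γ (k + 1)) (k : ℕ) : (c * k) ^ 2 ≤ γ k := by
  cases k with
  | zero => simpa using (sq_nonneg c).trans h0
  | succ m => exact sq_mul_succ_le_of_add_mul_sqrt_le hc h0 hrec m

/-- If `Γ > 0`, `γ 0 ≥ Γ²/9` and `γ (k+1) ≥ γ k + Γ·√(γ k)` for all `k`,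
then `γ k ≥ (Γ²/9)·k²` for all `k`. -/
theorem stmt_5 (Γ : ℝ) (hΓ : 0 < Γ) (γ : ℕ → ℝ)
    (h0 : Γ ^ 2 / 9 ≤ γ 0)
    (hrec : ∀ k : ℕ, γ k + Γ * Real.sqrt (γ k) ≤ γ (k + 1)) :
    ∀ k : ℕ, Γ ^ 2 / 9 * (k : ℝ) ^ 2 ≤ γ k := by
  have hsq : Γ ^ 2 / 9 = (Γ / 3) ^ 2 := by ring
  have hrec' : ∀ k, γ k + 3 * (Γ / 3) * √(γ k) ≤ γ (k + 1) := fun k => by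
    rw [show 3 * (Γ / 3) = Γ by ring]
    exact hrec k
  intro k
  have := sq_mul_le_of_add_mul_sqrt_le (by positivity) (hsq ▸ h0) hrec' k
  rwa [mul_pow, ← hsq] at this
end

section
/- Let η ∈ (0,1), let 0 < τ̂ ≤ τ̄, and let K ≥ 1 be an integer. Write log_{1/η}(x) = ln(x)/ln(1/η) and φ = (1 + √5)/2. Set τ_{-1} = τ̄ and let τ_0, …, τ_{K-1} and τ°_0, …, τ°_{K-1} be positive real numbers such that τ°_0 ≤ τ̄, τ°_k ≤ τ_{k-1}·√(1 + τ_{k-1}/τ_{k-2}) for every 1 ≤ k ≤ K-1 (with the convention τ_{-1} = τ̄), and τ̂ ≤ τ_k ≤ τ°_k for every 0 ≤ k ≤ K-1. Then Σ_{k=0}^{K-1} ( 1 + log_{1/η}(τ°_k/τ_k) ) ≤ (1 + log_{1/η}(φ))·K + log_{1/η}(τ̄/τ̂). -/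
/-! With `a₀ = τ̄` and `aₖ₊₁ = τₖ` the previously accepted step, the trial rule keeps
`τ°ₖ ≤ φ aₖ`: if `aₖ₊₁ ≤ τ°ₖ ≤ φ aₖ` then `τ°ₖ₊₁ ≤ aₖ₊₁ √(1 + aₖ₊₁/aₖ) ≤ aₖ₊₁ √(1 + φ) = φ aₖ₊₁`,
since `φ² = 1 + φ`. Hence `log (τ°ₖ/τₖ) ≤ log φ + log (aₖ/aₖ₊₁)`, and the last terms telescope to
`log (τ̄/τ_{K-1}) ≤ log (τ̄/τ̂)`. -/

open Real Finset goldenRatio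

lemma sqrt_one_add_le_goldenRatio {x : ℝ} (hx : x ≤ φ) : √(1 + x) ≤ φ := by
  rw [← sqrt_sq goldenRatio_pos.le, goldenRatio_sq]
  exact sqrt_le_sqrt (by linarith)

section StepSizes

variable {a b : ℕ → ℝ} {K : ℕ}

lemma le_goldenRatio_mul_of_trial_le (ha : ∀ k < K, 0 < a k) (h0 : b 0 ≤ a 0)
    (hacc : ∀ k < K, a (k + 1) ≤ b k)
    (htrial : ∀ k, k + 1 < K → b (k + 1) ≤ a (k + 1) * √(1 + a (k + 1) / a k)) :
    ∀ k < K, b k ≤ φ * a k := by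
  intro k hk
  induction k with
  | zero => nlinarith [ha 0 hk, one_lt_goldenRatio]
  | succ k ih =>
    have hak : 0 < a k := ha k (by omega)
    have hratio : a (k + 1) / a k ≤ φ :=
      (div_le_iff₀ hak).2 ((hacc k (by omega)).trans (ih (by omega)))
    calc b (k + 1) ≤ a (k + 1) * √(1 + a (k + 1) / a k) := htrial k hk
      _ ≤ a (k + 1) * φ :=
        mul_le_mul_of_nonneg_left (sqrt_one_add_le_goldenRatio hratio) (ha (k + 1) hk).le
      _ = φ * a (k + 1) := mul_comm _ _

lemma sum_log_div_le_of_le_goldenRatio_mul (ha : ∀ k ≤ K, 0 < a k)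
    (hacc : ∀ k < K, a (k + 1) ≤ b k) (hb : ∀ k < K, b k ≤ φ * a k) :
    ∑ k ∈ range K, log (b k / a (k + 1)) ≤ K * log φ + log (a 0 / a K) := by
  have hstep : ∀ k ∈ range K,
      log (b k / a (k + 1)) ≤ log φ + (log (a k) - log (a (k + 1))) := by
    intro k hk
    rw [mem_range] at hk
    have hak : 0 < a k := ha k hk.le
    have hak1 : 0 < a (k + 1) := ha (k + 1) hk
    have := log_le_log (hak1.trans_le (hacc k hk)) (hb k hk)
    rw [log_mul goldenRatio_ne_zero hak.ne'] at this
    rw [log_div (hak1.trans_le (hacc k hk)).ne' hak1.ne']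
    linarith
  calc ∑ k ∈ range K, log (b k / a (k + 1))
      ≤ ∑ k ∈ range K, (log φ + (log (a k) - log (a (k + 1)))) := sum_le_sum hstep
    _ = K * log φ + log (a 0 / a K) := by
      rw [sum_add_distrib, sum_range_sub', sum_const, card_range, nsmul_eq_mul,
        log_div (ha 0 (Nat.zero_le _)).ne' (ha K le_rfl).ne']

end StepSizes

theorem stmt_8_general (η : ℝ) (hη0 : 0 < η) (hη1 : η < 1)
    (τhat τbar : ℝ) (hτhat : 0 < τhat)
    (K : ℕ) (hK : 1 ≤ K)
    (τ τo : ℕ → ℝ)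
    (hτo0 : τo 0 ≤ τbar)
    (hτok : ∀ k : ℕ, 1 ≤ k → k ≤ K - 1 →
      τo k ≤ τ (k - 1) * Real.sqrt (1 + τ (k - 1) / (if k = 1 then τbar else τ (k - 2))))
    (hbound : ∀ k ≤ K - 1, τhat ≤ τ k ∧ τ k ≤ τo k) :
    ∑ k ∈ Finset.range K, (1 + Real.log (τo k / τ k) / Real.log (1 / η)) ≤
      (1 + Real.log ((1 + Real.sqrt 5) / 2) / Real.log (1 / η)) * K +
        Real.log (τbar / τhat) / Real.log (1 / η) := by
  set a : ℕ → ℝ := fun k => if k = 0 then τbar else τ (k - 1) with ha_def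
  have hτ : ∀ k < K, τhat ≤ τ k := fun k hk => (hbound k (by omega)).1
  have hττo : ∀ k < K, τ k ≤ τo k := fun k hk => (hbound k (by omega)).2
  have hτbar : τhat ≤ τbar := (hτ 0 (by omega)).trans ((hττo 0 (by omega)).trans hτo0)
  have ha : ∀ k ≤ K, 0 < a k := by
    rintro (_ | k) hk
    · exact hτhat.trans_le hτbar
    · exact hτhat.trans_le (hτ k hk)
  have htrial : ∀ k, k + 1 < K → τo (k + 1) ≤ a (k + 1) * √(1 + a (k + 1) / a k) := by
    intro k hk
    have := hτok (k + 1) (by omega) (by omega)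
    rcases k with _ | k <;> simpa [ha_def] using this
  have hbφ := le_goldenRatio_mul_of_trial_le (fun k hk => ha k hk.le) hτo0 hττo htrial
  have hsum := sum_log_div_le_of_le_goldenRatio_mul ha hττo hbφ
  have hlast : log (a 0 / a K) ≤ log (τbar / τhat) := by
    obtain ⟨k, rfl⟩ : ∃ k, K = k + 1 := ⟨K - 1, by omega⟩
    exact log_le_log (div_pos (ha 0 (by omega)) (ha (k + 1) le_rfl))
      (div_le_div_of_nonneg_left (ha 0 (by omega)).le hτhat (hτ k (by omega)))
  have hL : 0 < log (1 / η) := log_pos (by rw [lt_div_iff₀ hη0]; linarith)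
  change ∑ k ∈ range K, (1 + log (τo k / a (k + 1)) / log (1 / η)) ≤
    (1 + log φ / log (1 / η)) * K + log (τbar / τhat) / log (1 / η)
  rw [sum_add_distrib, ← sum_div, sum_const, card_range, nsmul_eq_mul, mul_one, add_mul, one_mul,
    add_assoc, div_mul_eq_mul_div, ← add_div, add_le_add_iff_left, mul_comm _ (K : ℝ)]
  exact div_le_div_of_nonneg_right (by linarith) hL.le

/-- Total number of backtracking-condition evaluations over `K` iterations of
the non-monotone step-size search.  With `η ∈ (0,1)`, `0 < τ̂ ≤ τ̄`, `K ≥ 1`,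
`τ₋₁ = τ̄`, initial trial step sizes `τ°ₖ` satisfying `τ°₀ ≤ τ̄` and
`τ°ₖ ≤ τ_{k-1}·√(1 + τ_{k-1}/τ_{k-2})` for `1 ≤ k ≤ K-1` (convention `τ₋₁ = τ̄`),
and accepted step sizes `τₖ` with `τ̂ ≤ τₖ ≤ τ°ₖ`, one has
`Σ_{k=0}^{K-1} (1 + log_{1/η}(τ°ₖ/τₖ)) ≤ (1 + log_{1/η} φ)·K + log_{1/η}(τ̄/τ̂)`,
where `φ = (1+√5)/2` and `log_{1/η} x = ln x / ln (1/η)`. -/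
theorem stmt_8 (η : ℝ) (hη0 : 0 < η) (hη1 : η < 1)
    (τhat τbar : ℝ) (hτhat : 0 < τhat) (hτhb : τhat ≤ τbar)
    (K : ℕ) (hK : 1 ≤ K)
    (τ τo : ℕ → ℝ)
    (hpos : ∀ k ≤ K - 1, 0 < τ k ∧ 0 < τo k)
    (hτo0 : τo 0 ≤ τbar)
    (hτok : ∀ k : ℕ, 1 ≤ k → k ≤ K - 1 →
      τo k ≤ τ (k - 1) * Real.sqrt (1 + τ (k - 1) / (if k = 1 then τbar else τ (k - 2))))
    (hbound : ∀ k ≤ K - 1, τhat ≤ τ k ∧ τ k ≤ τo k) :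
    ∑ k ∈ Finset.range K, (1 + Real.log (τo k / τ k) / Real.log (1 / η)) ≤
      (1 + Real.log ((1 + Real.sqrt 5) / 2) / Real.log (1 / η)) * K +
        Real.log (τbar / τhat) / Real.log (1 / η) :=
  stmt_8_general η hη0 hη1 τhat τbar hτhat K hK τ τo hτo0 hτok hbound
end

section
/- Let Ẑ ⊆ ℝ^d be a nonempty closed convex set, G : ℝ^d → ℝ^d a continuous map, and for z ∈ Ẑ set F(z) = {G(z) + w : w ∈ N_{Ẑ}(z)}. Let Ẑ* = {z ∈ Ẑ : 0 ∈ F(z)} and assume Ẑ* ≠ ∅. Assume local metric subregularity at every z* ∈ Ẑ*: for each z* ∈ Ẑ* there exist ε > 0 and ρ > 0 such that infDist(z, Ẑ*) ≤ ρ·infDist(0, F(z)) for all z ∈ Ẑ with ‖z - z*‖ < ε. Then for every compact set Z̄ ⊆ Ẑ with Z̄ ∩ Ẑ* ≠ ∅ there exists a constant ρ(Z̄) > 0 such that infDist(z, Ẑ*) ≤ ρ(Z̄)·infDist(0, F(z)) for all z ∈ Z̄. -/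
/-!
Near a solution `z* ∈ Ẑ*` the bound is the assumed local subregularity. Near a point `z ∈ Z̄`
outside `Ẑ*` the residual `infDist 0 (F ·)` stays bounded away from zero, because the graph of the
normal cone map is closed and `G` is continuous, while `infDist (·, Ẑ*)` stays bounded; so a
constant works there too. Compactness of `Z̄` turns these local constants into a global one.
-/

open scoped RealInnerProductSpace
open Filter Metric Topology

section LocalToGlobal

variable {X : Type*} [TopologicalSpace X]

theorem IsCompact.exists_pos_le_mul_of_forall_eventually {K : Set X} (hK : IsCompact K)
    {f g : X → ℝ} (hg : ∀ x ∈ K, 0 ≤ g x)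
    (hloc : ∀ x ∈ K, ∃ ρ : ℝ, ∀ᶠ y in 𝓝[K] x, f y ≤ ρ * g y) :
    ∃ ρ : ℝ, 0 < ρ ∧ ∀ x ∈ K, f x ≤ ρ * g x := by
  have mono : ∀ {ρ ρ' : ℝ} {x}, x ∈ K → ρ ≤ ρ' → f x ≤ ρ * g x → f x ≤ ρ' * g x :=
    fun hx hρ h => h.trans (mul_le_mul_of_nonneg_right hρ (hg _ hx))
  have key : ∃ ρ : ℝ, 0 < ρ ∧ ∀ x ∈ K ∩ K, f x ≤ ρ * g x := by
    refine hK.induction_on (p := fun s => ∃ ρ : ℝ, 0 < ρ ∧ ∀ x ∈ s ∩ K, f x ≤ ρ * g x)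
      ⟨1, one_pos, by simp⟩ ?_ ?_ ?_
    · rintro s t hst ⟨ρ, hρ, h⟩
      exact ⟨ρ, hρ, fun x hx => h x ⟨hst hx.1, hx.2⟩⟩
    · rintro s t ⟨ρ, hρ, hs⟩ ⟨ρ', -, ht⟩
      refine ⟨max ρ ρ', lt_max_of_lt_left hρ, fun x ⟨hx, hxK⟩ => ?_⟩
      rcases hx with hx | hx
      · exact mono hxK (le_max_left _ _) (hs x ⟨hx, hxK⟩)
      · exact mono hxK (le_max_right _ _) (ht x ⟨hx, hxK⟩)
    · intro x hx
      obtain ⟨ρ, hρ⟩ := hloc x hx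
      exact ⟨{y | f y ≤ ρ * g y}, hρ, max ρ 1, lt_max_of_lt_right one_pos,
        fun y ⟨hy, hyK⟩ => mono hyK (le_max_left _ _) hy⟩
  simpa using key

end LocalToGlobal

section NormalCone

variable {E : Type*} [NormedAddCommGroup E] [InnerProductSpace ℝ E]

def normalCone (C : Set E) (z : E) : Set E :=
  {w | ∀ z' ∈ C, ⟪w, z' - z⟫ ≤ 0}

theorem isClosed_setOf_mem_normalCone (C : Set E) :
    IsClosed {p : E × E | p.2 ∈ normalCone C p.1} := by
  have hgraph : {p : E × E | p.2 ∈ normalCone C p.1} =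
      ⋂ z' ∈ C, {p : E × E | ⟪p.2, z' - p.1⟫ ≤ 0} := by
    ext; simp [normalCone]
  rw [hgraph]
  exact isClosed_biInter fun z' _ => isClosed_le (by fun_prop) continuous_const

theorem exists_pos_eventually_le_norm_add_of_neg_notMem_normalCone {C : Set E} {G : E → E}
    {z : E} (hG : ContinuousAt G z) (hz : -G z ∉ normalCone C z) :
    ∃ c : ℝ, 0 < c ∧ ∀ᶠ z' in 𝓝 z, ∀ w ∈ normalCone C z', c ≤ ‖G z' + w‖ := by
  -- `(z', u) ↦ (z', u - G z')` sends `(z, 0)` off the closed graph of `N_C`.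
  have hshift : ContinuousAt (fun p : E × E => (p.1, p.2 - G p.1)) (z, 0) :=
    continuousAt_fst.prodMk (continuousAt_snd.sub (hG.comp continuousAt_fst))
  have hmem : {p : E × E | p.2 - G p.1 ∉ normalCone C p.1} ∈ 𝓝 (z, 0) :=
    hshift.preimage_mem_nhds
      ((isClosed_setOf_mem_normalCone C).isOpen_compl.mem_nhds (by simpa using hz))
  obtain ⟨U, hU, V, hV, hUV⟩ := mem_nhds_prod_iff.1 hmem
  obtain ⟨c, hc, hball⟩ := Metric.mem_nhds_iff.1 hV
  refine ⟨c, hc, mem_of_superset hU fun z' hz' w hw => ?_⟩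
  by_contra! hlt
  have hpair : (z', G z' + w) ∈ U ×ˢ V := ⟨hz', hball (by simpa using hlt)⟩
  exact hUV hpair (by simpa using hw)

theorem le_infDist_zero_of_forall_le_norm_add {C : Set E} {G : E → E} {z : E} {c : ℝ}
    (h : ∀ w ∈ normalCone C z, c ≤ ‖G z + w‖) :
    c ≤ infDist 0 {u | ∃ w ∈ normalCone C z, u = G z + w} := by
  have hne : {u | ∃ w ∈ normalCone C z, u = G z + w}.Nonempty :=
    ⟨G z, 0, fun _ _ => by simp, by simp⟩
  refine (le_infDist hne).2 ?_
  rintro _ ⟨w, hw, rfl⟩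
  simpa using h w hw

end NormalCone

theorem stmt_11_general {d : ℕ}
    (Zhat : Set (EuclideanSpace ℝ (Fin d)))
    (G : EuclideanSpace ℝ (Fin d) → EuclideanSpace ℝ (Fin d)) (hG : Continuous G)
    (F : EuclideanSpace ℝ (Fin d) → Set (EuclideanSpace ℝ (Fin d)))
    (hF : ∀ z ∈ Zhat, F z =
      {u | ∃ w, (∀ z' ∈ Zhat, ⟪w, z' - z⟫ ≤ 0) ∧ u = G z + w})
    (Zstar : Set (EuclideanSpace ℝ (Fin d)))
    (hZstar : Zstar = {z | z ∈ Zhat ∧ (0 : EuclideanSpace ℝ (Fin d)) ∈ F z})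
    (hsubreg : ∀ zs ∈ Zstar, ∃ ε : ℝ, 0 < ε ∧ ∃ ρ : ℝ, 0 < ρ ∧
      ∀ z ∈ Zhat, ‖z - zs‖ < ε →
        Metric.infDist z Zstar ≤ ρ * Metric.infDist 0 (F z)) :
    ∀ Zbar ⊆ Zhat, IsCompact Zbar → (Zbar ∩ Zstar).Nonempty →
      ∃ ρZ : ℝ, 0 < ρZ ∧ ∀ z ∈ Zbar,
        Metric.infDist z Zstar ≤ ρZ * Metric.infDist 0 (F z) := by
  intro Zbar hsub hcpt _
  refine hcpt.exists_pos_le_mul_of_forall_eventually (fun _ _ => infDist_nonneg) fun z hz => ?_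
  by_cases hzs : z ∈ Zstar
  · obtain ⟨ε, hε, ρ, -, hρ⟩ := hsubreg z hzs
    refine ⟨ρ, ?_⟩
    filter_upwards [self_mem_nhdsWithin, nhdsWithin_le_nhds (ball_mem_nhds z hε)] with y hy hyz
    exact hρ y (hsub hy) (by simpa [dist_eq_norm] using hyz)
  · have hnotMem : -G z ∉ normalCone Zhat z := fun hN =>
      hzs (by rw [hZstar, Set.mem_ofPred_eq, hF z (hsub hz)]; exact ⟨hsub hz, -G z, hN, by simp⟩)
    obtain ⟨c, hc, hres⟩ :=
      exists_pos_eventually_le_norm_add_of_neg_notMem_normalCone hG.continuousAt hnotMem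
    have hdist : ∀ᶠ y in 𝓝 z, infDist y Zstar < infDist z Zstar + 1 :=
      (continuous_infDist_pt Zstar).continuousAt.eventually_lt continuousAt_const (by simp)
    refine ⟨(infDist z Zstar + 1) / c, ?_⟩
    filter_upwards [self_mem_nhdsWithin, nhdsWithin_le_nhds hres,
      nhdsWithin_le_nhds hdist] with y hy hyres hydist
    have hc_le : c ≤ infDist 0 (F y) :=
      hF y (hsub hy) ▸ le_infDist_zero_of_forall_le_norm_add hyres
    calc infDist y Zstar ≤ (infDist z Zstar + 1) / c * c := by
          rw [div_mul_cancel₀ _ hc.ne']; exact hydist.le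
      _ ≤ (infDist z Zstar + 1) / c * infDist 0 (F y) := by
          gcongr; exact div_nonneg (add_nonneg infDist_nonneg zero_le_one) hc.le

/-- Globalization of metric subregularity on compact sets.  Let
`Ẑ ⊆ ℝ^d` be nonempty closed convex, `G` continuous, `F z = G z + N_Ẑ(z)` on `Ẑ`,
`Ẑ* = {z ∈ Ẑ : 0 ∈ F z}` nonempty, and assume local metric subregularity at every
`z* ∈ Ẑ*`.  Then for every compact `Z̄ ⊆ Ẑ` meeting `Ẑ*` there exists `ρ(Z̄) > 0` with
`infDist(z, Ẑ*) ≤ ρ(Z̄)·infDist(0, F z)` for all `z ∈ Z̄`. -/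
theorem stmt_11 {d : ℕ}
    (Zhat : Set (EuclideanSpace ℝ (Fin d)))
    (hZne : Zhat.Nonempty) (hZclosed : IsClosed Zhat) (hZconv : Convex ℝ Zhat)
    (G : EuclideanSpace ℝ (Fin d) → EuclideanSpace ℝ (Fin d)) (hG : Continuous G)
    (F : EuclideanSpace ℝ (Fin d) → Set (EuclideanSpace ℝ (Fin d)))
    (hF : ∀ z ∈ Zhat, F z =
      {u | ∃ w, (∀ z' ∈ Zhat, ⟪w, z' - z⟫ ≤ 0) ∧ u = G z + w})
    (Zstar : Set (EuclideanSpace ℝ (Fin d)))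
    (hZstar : Zstar = {z | z ∈ Zhat ∧ (0 : EuclideanSpace ℝ (Fin d)) ∈ F z})
    (hZstarne : Zstar.Nonempty)
    (hsubreg : ∀ zs ∈ Zstar, ∃ ε : ℝ, 0 < ε ∧ ∃ ρ : ℝ, 0 < ρ ∧
      ∀ z ∈ Zhat, ‖z - zs‖ < ε →
        Metric.infDist z Zstar ≤ ρ * Metric.infDist 0 (F z)) :
    ∀ Zbar ⊆ Zhat, IsCompact Zbar → (Zbar ∩ Zstar).Nonempty →
      ∃ ρZ : ℝ, 0 < ρZ ∧ ∀ z ∈ Zbar,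
        Metric.infDist z Zstar ≤ ρZ * Metric.infDist 0 (F z) :=
  stmt_11_general Zhat G hG F hF Zstar hZstar hsubreg
end

section
/- Let b_1, …, b_N ∈ ℝ^m. There exists a constant γ > 0 such that for every λ in the conic hull { Σ_{i=1}^N ρ_i·b_i : ρ ∈ ℝ^N, ρ_i ≥ 0 for all i }, there exists ρ ∈ ℝ^N with ρ_i ≥ 0 for all i, Σ_{i=1}^N ρ_i·b_i = λ, and ‖ρ‖ ≤ γ·‖λ‖. -/
open Finset

noncomputable def sumMap {N m : ℕ} (b : Fin N → EuclideanSpace ℝ (Fin m)) :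
    EuclideanSpace ℝ (Fin N) →ₗ[ℝ] EuclideanSpace ℝ (Fin m) where
  toFun ρ := ∑ i, ρ i • b i
  map_add' x y := by
    simp [PiLp.add_apply, add_smul, Finset.sum_add_distrib]
  map_smul' c x := by
    simp [PiLp.smul_apply, smul_smul, Finset.smul_sum]

noncomputable def suppSub {N : ℕ} (s : Finset (Fin N)) :
    Submodule ℝ (EuclideanSpace ℝ (Fin N)) where
  carrier := {ρ | ∀ i ∉ s, ρ i = 0}
  add_mem' := by intro a c ha hc i hi; simp [PiLp.add_apply, ha i hi, hc i hi]
  zero_mem' := by intro i hi; rfl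
  smul_mem' := by intro c a ha i hi; simp [PiLp.smul_apply, ha i hi]

lemma boundOnSupp {N m : ℕ} (b : Fin N → EuclideanSpace ℝ (Fin m)) (s : Finset (Fin N))
    (h : LinearIndependent ℝ (fun i : s => b i)) :
    ∃ C : ℝ, ∀ ρ : EuclideanSpace ℝ (Fin N), (∀ i ∉ s, ρ i = 0) →
      ‖ρ‖ ≤ C * ‖∑ i, ρ i • b i‖ := by
  set L := (sumMap b).comp (suppSub s).subtype with hL
  have hLval : ∀ ρ : suppSub s, L ρ = ∑ i, (ρ : EuclideanSpace ℝ (Fin N)) i • b i := fun _ => rfl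
  have hinj : Function.Injective L := by
    rw [← LinearMap.ker_eq_bot, LinearMap.ker_eq_bot']
    intro ρ hρ
    have hsum : ∑ i : s, (ρ : EuclideanSpace ℝ (Fin N)) i • b i = 0 := by
      rw [Finset.sum_coe_sort s (fun i => (ρ : EuclideanSpace ℝ (Fin N)) i • b i),
        Finset.sum_subset (Finset.subset_univ s)
          (fun i _ hi => by rw [ρ.2 i hi, zero_smul])]
      exact hρ
    have h0 := Fintype.linearIndependent_iff.mp h
      (fun i : s => (ρ : EuclideanSpace ℝ (Fin N)) i) hsum
    have : (ρ : EuclideanSpace ℝ (Fin N)) = 0 := by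
      ext i
      by_cases hi : i ∈ s
      · exact h0 ⟨i, hi⟩
      · exact ρ.2 i hi
    exact Subtype.ext this
  let e : suppSub s ≃ₗ[ℝ] LinearMap.range L := LinearEquiv.ofInjective L hinj
  let e' := e.toContinuousLinearEquiv
  refine ⟨‖(e'.symm : LinearMap.range L →L[ℝ] suppSub s)‖, ?_⟩
  intro ρ hρ
  set x : suppSub s := ⟨ρ, hρ⟩ with hx
  have h1 : ‖ρ‖ = ‖x‖ := rfl
  have h2 : x = e'.symm (e' x) := (e'.symm_apply_apply x).symm
  have h3 : ‖x‖ ≤ ‖(e'.symm : LinearMap.range L →L[ℝ] suppSub s)‖ * ‖e' x‖ := by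
    conv_lhs => rw [h2]
    exact (e'.symm : LinearMap.range L →L[ℝ] suppSub s).le_opNorm (e' x)
  have h4 : ‖e' x‖ = ‖∑ i, ρ i • b i‖ := by
    have : ((e' x : LinearMap.range L) : EuclideanSpace ℝ (Fin m)) = ∑ i, ρ i • b i := by
      have : (e' x : LinearMap.range L) = e x := rfl
      rw [this]
      rfl
    rw [← this]
    rfl
  rw [h1, ← h4]
  exact h3

open Finset

lemma carat {N m : ℕ} (b : Fin N → EuclideanSpace ℝ (Fin m)) :
    ∀ n (ρ : Fin N → ℝ), (Finset.univ.filter (fun i => ρ i ≠ 0)).card ≤ n →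
      (∀ i, 0 ≤ ρ i) →
      ∃ σ : Fin N → ℝ, (∀ i, 0 ≤ σ i) ∧ (∑ i, σ i • b i = ∑ i, ρ i • b i) ∧
        LinearIndependent ℝ (fun i : {i // σ i ≠ 0} => b i) := by
  intro n
  induction n with
  | zero =>
    intro ρ hcard _
    have hz : ∀ i, ρ i = 0 := by
      intro i
      by_contra hi
      have : i ∈ Finset.univ.filter (fun i => ρ i ≠ 0) := by simp [hi]
      have := Finset.card_pos.mpr ⟨i, this⟩
      omega
    haveI : IsEmpty {i // ρ i ≠ 0} := ⟨fun ⟨i, hi⟩ => hi (hz i)⟩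
    exact ⟨ρ, fun i => (hz i).ge, rfl, linearIndependent_empty_type⟩
  | succ n ih =>
    intro ρ hcard hpos
    by_cases hind : LinearIndependent ℝ (fun i : {i // ρ i ≠ 0} => b i)
    · exact ⟨ρ, hpos, rfl, hind⟩
    · obtain ⟨g, hgsum, j, hgj⟩ := Fintype.not_linearIndependent_iff.mp hind
      obtain ⟨c, hc0, hcsum, k, hck⟩ :
          ∃ c : Fin N → ℝ, (∀ i, ρ i = 0 → c i = 0) ∧ (∑ i, c i • b i = 0) ∧
            ∃ k, 0 < c k := by
        set c0 : Fin N → ℝ := fun i => if h : ρ i ≠ 0 then g ⟨i, h⟩ else 0 with hc0def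
        have hsupp : ∀ i, ρ i = 0 → c0 i = 0 := by
          intro i hi; simp [hc0def, hi]
        have hc0j : c0 (j : Fin N) = g j := by simp [hc0def, j.2]
        have hsum0 : ∑ i, c0 i • b i = 0 := by
          have h1 : ∑ i ∈ Finset.univ.filter (fun i => ρ i ≠ 0), c0 i • b i
              = ∑ i, c0 i • b i :=
            Finset.sum_subset (Finset.subset_univ _)
              (fun i _ hi => by
                have : ρ i = 0 := by simpa using hi
                rw [hsupp i this, zero_smul])
          have h2 : ∑ i ∈ Finset.univ.filter (fun i => ρ i ≠ 0), c0 i • b i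
              = ∑ i : {i // ρ i ≠ 0}, c0 (i : Fin N) • b (i : Fin N) :=
            Finset.sum_subtype _ (by simp) _
          rw [← h1, h2, ← hgsum]
          refine Finset.sum_congr rfl (fun i _ => ?_)
          simp [hc0def, i.2]
        rcases le_or_gt (g j) 0 with hgle | hglt
        · refine ⟨-c0, fun i hi => by simp [hsupp i hi], ?_, ⟨j, ?_⟩⟩
          · rw [show ∑ i, (-c0) i • b i = -∑ i, c0 i • b i by
              rw [← Finset.sum_neg_distrib]; exact Finset.sum_congr rfl (fun i _ => by simp),
              hsum0, neg_zero]
          · have : g j < 0 := lt_of_le_of_ne hgle hgj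
            simpa [hc0j] using this
        · exact ⟨c0, hsupp, hsum0, j, by rw [hc0j]; exact hglt⟩
      -- subtract the largest feasible multiple of c
      have hP : k ∈ Finset.univ.filter (fun i => 0 < c i) := by simp [hck]
      obtain ⟨i0, hi0mem, hi0min⟩ := Finset.exists_min_image
        (Finset.univ.filter (fun i => 0 < c i)) (fun i => ρ i / c i) ⟨k, hP⟩
      have hci0 : 0 < c i0 := by simpa using hi0mem
      set t : ℝ := ρ i0 / c i0 with ht
      have htnn : 0 ≤ t := div_nonneg (hpos i0) hci0.le
      set σ : Fin N → ℝ := fun i => ρ i - t * c i with hσ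
      have hσnn : ∀ i, 0 ≤ σ i := by
        intro i
        rcases le_or_gt (c i) 0 with hci | hci
        · have : t * c i ≤ 0 := mul_nonpos_of_nonneg_of_nonpos htnn hci
          have := hpos i
          simp only [hσ]; linarith
        · have hmem : i ∈ Finset.univ.filter (fun i => 0 < c i) := by simp [hci]
          have := hi0min i hmem
          have : t * c i ≤ ρ i := by
            rw [← le_div_iff₀ hci]; exact this
          simp only [hσ]; linarith
      have hσsum : ∑ i, σ i • b i = ∑ i, ρ i • b i := by
        have : ∀ i, σ i • b i = ρ i • b i - t • (c i • b i) := by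
          intro i; simp [hσ, sub_smul, mul_smul]
        simp only [this, Finset.sum_sub_distrib, ← Finset.smul_sum, hcsum, smul_zero, sub_zero]
      have hρi0 : ρ i0 ≠ 0 := fun h => by
        have := hc0 i0 h; rw [this] at hci0; exact lt_irrefl 0 hci0
      have hσi0 : σ i0 = 0 := by
        simp only [hσ, ht]
        field_simp
        ring
      have hsub : Finset.univ.filter (fun i => σ i ≠ 0) ⊆
          Finset.univ.filter (fun i => ρ i ≠ 0) := by
        intro i hi
        simp only [Finset.mem_filter, Finset.mem_univ, true_and] at hi ⊢
        intro h
        exact hi (by simp [hσ, h, hc0 i h])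
      have hcard' : (Finset.univ.filter (fun i => σ i ≠ 0)).card ≤ n := by
        have hlt : (Finset.univ.filter (fun i => σ i ≠ 0)).card <
            (Finset.univ.filter (fun i => ρ i ≠ 0)).card := by
          refine Finset.card_lt_card ⟨hsub, ?_⟩
          intro hss
          have : i0 ∈ Finset.univ.filter (fun i => σ i ≠ 0) := hss (by simp [hρi0])
          simp [hσi0] at this
        omega
      obtain ⟨σ', h1, h2, h3⟩ := ih σ hcard' hσnn
      exact ⟨σ', h1, h2.trans hσsum, h3⟩




/-- Uniform conic Carathéodory bound: given `b₁, …, b_N ∈ ℝ^m`, there is a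
constant `γ > 0` such that every `λ` in the conic hull of the `bᵢ` admits a nonnegative
representation `λ = Σ ρᵢ bᵢ` with `‖ρ‖ ≤ γ‖λ‖` (Euclidean norms). -/
theorem stmt_13 {N m : ℕ} (b : Fin N → EuclideanSpace ℝ (Fin m)) :
    ∃ γ : ℝ, 0 < γ ∧ ∀ lam : EuclideanSpace ℝ (Fin m),
      (∃ ρ : EuclideanSpace ℝ (Fin N), (∀ i, 0 ≤ ρ i) ∧ ∑ i, ρ i • b i = lam) →
      ∃ ρ : EuclideanSpace ℝ (Fin N), (∀ i, 0 ≤ ρ i) ∧ ∑ i, ρ i • b i = lam ∧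
        ‖ρ‖ ≤ γ * ‖lam‖ := by
  have hC : ∀ s : Finset (Fin N), ∃ C : ℝ,
      LinearIndependent ℝ (fun i : s => b i) →
      ∀ ρ : EuclideanSpace ℝ (Fin N), (∀ i ∉ s, ρ i = 0) →
        ‖ρ‖ ≤ C * ‖∑ i, ρ i • b i‖ := by
    intro s
    by_cases h : LinearIndependent ℝ (fun i : s => b i)
    · obtain ⟨C, hCp⟩ := boundOnSupp b s h
      exact ⟨C, fun _ => hCp⟩
    · exact ⟨0, fun h' => absurd h' h⟩
  choose C hCspec using hC
  refine ⟨1 + ∑ s : Finset (Fin N), max (C s) 0, ?_, ?_⟩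
  · have : (0:ℝ) ≤ ∑ s : Finset (Fin N), max (C s) 0 :=
      Finset.sum_nonneg (fun s _ => le_max_right _ _)
    linarith
  · intro lam ⟨ρ₀, hρ₀nn, hρ₀sum⟩
    obtain ⟨σ, hσnn, hσsum, hσind⟩ := carat b
      (Finset.univ.filter (fun i => ρ₀ i ≠ 0)).card ρ₀ le_rfl hρ₀nn
    set s : Finset (Fin N) := Finset.univ.filter (fun i => σ i ≠ 0) with hs
    have hsupp : ∀ i ∉ s, σ i = 0 := by
      intro i hi
      by_contra h
      exact hi (by simp [hs, h])
    have hind : LinearIndependent ℝ (fun i : s => b i) := by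
      let e : (s : Type) ≃ {i // σ i ≠ 0} :=
        Equiv.subtypeEquivRight (by intro i; simp [hs])
      have h' := hσind.comp e e.injective
      have : ((fun i : {i // σ i ≠ 0} => b i) ∘ e) = fun i : s => b i := by
        funext i; simp [e, Equiv.subtypeEquivRight]; rfl
      rwa [this] at h'
    let σE : EuclideanSpace ℝ (Fin N) := WithLp.toLp 2 σ
    have hbound := hCspec s hind σE hsupp
    refine ⟨σE, hσnn, hσsum.trans hρ₀sum, ?_⟩
    have hCle : C s ≤ 1 + ∑ t : Finset (Fin N), max (C t) 0 := by
      have h1 : max (C s) 0 ≤ ∑ t : Finset (Fin N), max (C t) 0 :=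
        Finset.single_le_sum (fun t _ => le_max_right (C t) 0) (Finset.mem_univ s)
      have := le_max_left (C s) 0
      linarith
    calc ‖σE‖ ≤ C s * ‖∑ i, σE i • b i‖ := hbound
      _ = C s * ‖lam‖ := by rw [show ∑ i, σE i • b i = ∑ i, σ i • b i from rfl, hσsum, hρ₀sum]
      _ ≤ (1 + ∑ t : Finset (Fin N), max (C t) 0) * ‖lam‖ :=
          mul_le_mul_of_nonneg_right hCle (norm_nonneg _)
end

section
/- Let A ∈ ℝ^{m̄×m}, let K = {y ∈ ℝ^m : Ay ≥ 0 componentwise}, and let K* = {w ∈ ℝ^m : ⟨w,u⟩ ≥ 0 for all u ∈ K} be its dual cone. Let ρ ∈ ℝ^{m̄} with ρ ≥ 0 componentwise, let λ = Aᵀρ, and let u ∈ ℝ^m. Then ‖min{ρ, -Au}‖ ≤ ‖A‖ · infDist(0, -u + N_{K*}(λ)), where min{·,·} is taken componentwise, ‖A‖ is the ℓ²-operator norm of A, -u + N_{K*}(λ) = {-u + z : z ∈ N_{K*}(λ)}, and N_{K*}(λ) = {z ∈ ℝ^m : ⟨z, λ' - λ⟩ ≤ 0 for all λ' ∈ K*}.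 -/
open scoped RealInnerProductSpace

lemma stmt14_abs_aux (r a b : ℝ) (hr : 0 ≤ r) (hb : b ≤ 0) (hrb : r * b = 0) :
    |min r a| ≤ |a + b| := by
  rcases hb.lt_or_eq with hb' | rfl
  · have hr0 : r = 0 := by nlinarith
    subst hr0
    rcases le_total a 0 with ha | ha
    · rw [min_eq_right ha, abs_of_nonpos ha, abs_of_nonpos (by linarith)]
      linarith
    · rw [min_eq_left ha]
      simp [abs_nonneg]
  · rw [add_zero]
    rcases le_total a r with h | h
    · rw [min_eq_right h]
    · rw [min_eq_left h, abs_of_nonneg hr]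
      exact h.trans (le_abs_self a)

/-- Let `A ∈ ℝ^{m̄×m}`, `K = {y : A y ≥ 0}` with dual cone `K*`, `ρ ≥ 0`
componentwise, `λ = Aᵀρ`, and `u ∈ ℝ^m`.  Then
`‖min{ρ, -A u}‖ ≤ ‖A‖ · infDist(0, -u + N_{K*}(λ))`, where the minimum is taken
componentwise, `‖A‖` is the ℓ²-operator norm, and `N_{K*}(λ)` is the normal cone of `K*`
at `λ`. -/
theorem stmt_14 {mb m : ℕ}
    (A : Matrix (Fin mb) (Fin m) ℝ)
    (K : Set (EuclideanSpace ℝ (Fin m)))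
    (hK : K = {y | ∀ i, 0 ≤ Matrix.toEuclideanLin A y i})
    (Kstar : Set (EuclideanSpace ℝ (Fin m)))
    (hKstar : Kstar = {w | ∀ u ∈ K, 0 ≤ ⟪w, u⟫})
    (ρ : EuclideanSpace ℝ (Fin mb)) (hρ : ∀ i, 0 ≤ ρ i)
    (lam : EuclideanSpace ℝ (Fin m)) (hlam : lam = Matrix.toEuclideanLin A.transpose ρ)
    (u : EuclideanSpace ℝ (Fin m)) :
    ‖(EuclideanSpace.equiv (Fin mb) ℝ).symm
        (fun i => min (ρ i) (-(Matrix.toEuclideanLin A u i)))‖ ≤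
      ‖LinearMap.toContinuousLinearMap (Matrix.toEuclideanLin A)‖ *
        Metric.infDist 0
          {w | ∃ z, (∀ lam' ∈ Kstar, ⟪z, lam' - lam⟫ ≤ 0) ∧ w = -u + z} := by
  classical
  set T := LinearMap.toContinuousLinearMap (Matrix.toEuclideanLin A) with hT
  set S : Set (EuclideanSpace ℝ (Fin m)) :=
    {w | ∃ z, (∀ lam' ∈ Kstar, ⟪z, lam' - lam⟫ ≤ 0) ∧ w = -u + z} with hS
  set v : EuclideanSpace ℝ (Fin mb) :=
    (EuclideanSpace.equiv (Fin mb) ℝ).symm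
      (fun i => min (ρ i) (-(Matrix.toEuclideanLin A u i))) with hv
  -- adjoint identity
  have hadj : ∀ (x : EuclideanSpace ℝ (Fin mb)) (y : EuclideanSpace ℝ (Fin m)),
      ⟪Matrix.toEuclideanLin A.transpose x, y⟫ = ⟪x, Matrix.toEuclideanLin A y⟫ := by
    intro x y
    simp only [PiLp.inner_apply, RCLike.inner_apply, starRingEnd_apply, star_trivial,
      Matrix.toEuclideanLin_apply]
    simp only [Matrix.mulVec, dotProduct, Finset.sum_mul, Finset.mul_sum,
      Matrix.transpose_apply]
    rw [Finset.sum_comm]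
    congr 1; ext j; congr 1; ext i; ring
  -- ⟪lam, y⟫ ≥ 0 for y ∈ K
  have hlamy : ∀ y ∈ K, 0 ≤ ⟪lam, y⟫ := by
    intro y hy
    rw [hlam, hadj, PiLp.inner_apply]
    apply Finset.sum_nonneg
    intro i _
    simp only [RCLike.inner_apply, starRingEnd_apply, star_trivial]
    exact mul_nonneg ((hK ▸ hy) i) (hρ i)
  have hlamK : ∀ c : ℝ, 0 ≤ c → (c • lam) ∈ Kstar := by
    intro c hc
    rw [hKstar]
    intro y hy
    rw [real_inner_smul_left]
    exact mul_nonneg hc (hlamy y hy)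
  -- rows of A are in Kstar when added to lam
  have hrow : ∀ i : Fin mb,
      lam + Matrix.toEuclideanLin A.transpose (EuclideanSpace.single i 1) ∈ Kstar := by
    intro i
    rw [hKstar]
    intro y hy
    rw [inner_add_left, hadj, EuclideanSpace.inner_single_left]
    simp only [map_one, one_mul]
    exact add_nonneg (hlamy y hy) ((hK ▸ hy) i)
  -- key bound
  have key : ∀ w ∈ S, ‖v‖ ≤ ‖T‖ * dist (0 : EuclideanSpace ℝ (Fin m)) w := by
    rintro w ⟨z, hz, rfl⟩
    have hb : ∀ i, Matrix.toEuclideanLin A z i ≤ 0 := by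
      intro i
      have h := hz _ (hrow i)
      rw [add_sub_cancel_left, real_inner_comm, hadj, EuclideanSpace.inner_single_left] at h
      simpa using h
    have hzl : ⟪z, lam⟫ = 0 := by
      have h2 := hz ((2 : ℝ) • lam) (hlamK 2 (by norm_num))
      have h0 := hz ((0 : ℝ) • lam) (hlamK 0 le_rfl)
      have e2 : (2 : ℝ) • lam - lam = lam := by
        rw [two_smul]; abel
      have e0 : (0 : ℝ) • lam - lam = -lam := by
        rw [zero_smul]; abel
      rw [e2] at h2
      rw [e0, inner_neg_right] at h0
      linarith
    have hsum : ∑ i, ρ i * Matrix.toEuclideanLin A z i = 0 := by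
      have : ⟪z, lam⟫ = ∑ i, ρ i * Matrix.toEuclideanLin A z i := by
        rw [hlam, real_inner_comm, hadj, PiLp.inner_apply]
        simp [RCLike.inner_apply, mul_comm]
      rw [this] at hzl
      exact hzl
    have hprod : ∀ i, ρ i * Matrix.toEuclideanLin A z i = 0 := by
      have hterm : ∀ i ∈ Finset.univ, (0:ℝ) ≤ -(ρ i * Matrix.toEuclideanLin A z i) := by
        intro i _
        have := mul_nonneg (hρ i) (neg_nonneg.mpr (hb i))
        linarith [this]
      have hsum' : ∑ i, -(ρ i * Matrix.toEuclideanLin A z i) = 0 := by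
        rw [Finset.sum_neg_distrib, hsum, neg_zero]
      intro i
      have := (Finset.sum_eq_zero_iff_of_nonneg hterm).mp hsum' i (Finset.mem_univ i)
      linarith
    have hpt : ∀ i, |min (ρ i) (-(Matrix.toEuclideanLin A u i))| ≤
        |Matrix.toEuclideanLin A (-u + z) i| := by
      intro i
      have e : Matrix.toEuclideanLin A (-u + z) i =
          -(Matrix.toEuclideanLin A u i) + Matrix.toEuclideanLin A z i := by
        rw [map_add, map_neg]
        rfl
      rw [e]
      exact stmt14_abs_aux _ _ _ (hρ i) (hb i) (hprod i)
    have h1 : ‖v‖ ≤ ‖Matrix.toEuclideanLin A (-u + z)‖ := by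
      rw [EuclideanSpace.norm_eq, EuclideanSpace.norm_eq]
      apply Real.sqrt_le_sqrt
      apply Finset.sum_le_sum
      intro i _
      simp only [Real.norm_eq_abs]
      have hvi : v i = min (ρ i) (-(Matrix.toEuclideanLin A u i)) := rfl
      rw [hvi]
      exact pow_le_pow_left₀ (abs_nonneg _) (hpt i) 2
    have h2 : ‖Matrix.toEuclideanLin A (-u + z)‖ ≤ ‖T‖ * ‖-u + z‖ := by
      have := T.le_opNorm (-u + z)
      simp at this ⊢
      exact this
    rw [dist_zero_left]
    linarith
  have hne : S.Nonempty := ⟨-u + 0, 0, fun lam' _ => by simp, rfl⟩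
  rcases (norm_nonneg T).lt_or_eq with hTpos | hT0
  · have hle : ‖v‖ / ‖T‖ ≤ Metric.infDist 0 S := by
      by_contra hlt
      push_neg at hlt
      obtain ⟨w, hwS, hw⟩ := (Metric.infDist_lt_iff hne).mp hlt
      have hk := key w hwS
      rw [lt_div_iff₀ hTpos] at hw
      nlinarith
    calc ‖v‖ = ‖T‖ * (‖v‖ / ‖T‖) := by field_simp
    _ ≤ ‖T‖ * Metric.infDist 0 S := by
        exact mul_le_mul_of_nonneg_left hle hTpos.le
  · have hk := key (-u + 0) ⟨0, fun lam' _ => by simp, rfl⟩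
    rw [← hT0, zero_mul] at hk
    calc ‖v‖ ≤ 0 := hk
    _ ≤ ‖T‖ * Metric.infDist 0 S :=
        mul_nonneg (norm_nonneg T) Metric.infDist_nonneg
end

section
/- Let K ⊆ ℝ^m be a closed convex polyhedral cone with nonempty interior, let X ⊆ ℝ^n be a nonempty polyhedral set, let x̄ ∈ X, and let f : ℝ^n → ℝ, g : ℝ^n → ℝ^m, h : ℝ^n → ℝ^p be continuously differentiable on a neighborhood of x̄. Define Φ(x,v,λ) = f(x) + ⟨v, h(x)⟩ + ⟨λ, g(x)⟩ and the multiplier set M(x̄) = {(v,λ) ∈ ℝ^p × K* : -∇_x Φ(x̄,v,λ) ∈ N_X(x̄) and ⟨λ, g(x̄)⟩ = 0}. Assume: (i) whenever ∇h(x̄)ᵀv + s = 0 with v ∈ ℝ^p and s ∈ N_X(x̄), then v = 0 and s = 0; (ii) there exists d ∈ T_X(x̄) with ∇h(x̄)·d = 0 and g(x̄) + ∇g(x̄)·d ∈ -int(K). Then M(x̄) is bounded. -/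
open scoped RealInnerProductSpace

set_option maxHeartbeats 1000000

/-- Boundedness of the multiplier set under conic MFCQ relative to a
polyhedral set.  `K ⊆ ℝ^m` is a polyhedral closed convex cone with nonempty interior,
`X ⊆ ℝ^n` a nonempty polyhedral set, `x̄ ∈ X`, and `f, g, h` are `C¹` near `x̄`.  With
`M(x̄) = {(v,λ) ∈ ℝ^p × K* : -∇ₓΦ(x̄,v,λ) ∈ N_X(x̄), ⟨λ, g x̄⟩ = 0}`, assume
(i) `∇h(x̄)ᵀv + s = 0`, `s ∈ N_X(x̄)` implies `v = 0, s = 0`, and (ii) there is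
`d ∈ T_X(x̄)` with `∇h(x̄)d = 0` and `g x̄ + ∇g(x̄)d ∈ -int K`.  Then `M(x̄)` is bounded. -/
theorem stmt_15 {n m p : ℕ}
    (K : Set (EuclideanSpace ℝ (Fin m)))
    (hKpoly : ∃ (N : ℕ) (a : Fin N → EuclideanSpace ℝ (Fin m)),
      K = {y | ∀ j, 0 ≤ ⟪a j, y⟫})
    (hKint : (interior K).Nonempty)
    (X : Set (EuclideanSpace ℝ (Fin n))) (hXne : X.Nonempty)
    (hXpoly : ∃ (N : ℕ) (a : Fin N → EuclideanSpace ℝ (Fin n)) (β : Fin N → ℝ),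
      X = {x | ∀ j, ⟪a j, x⟫ ≤ β j})
    (xbar : EuclideanSpace ℝ (Fin n)) (hxbarX : xbar ∈ X)
    (f : EuclideanSpace ℝ (Fin n) → ℝ)
    (g : EuclideanSpace ℝ (Fin n) → EuclideanSpace ℝ (Fin m))
    (h : EuclideanSpace ℝ (Fin n) → EuclideanSpace ℝ (Fin p))
    (hC1 : ∃ U, IsOpen U ∧ xbar ∈ U ∧
      ContDiffOn ℝ 1 f U ∧ ContDiffOn ℝ 1 g U ∧ ContDiffOn ℝ 1 h U)
    (Kstar : Set (EuclideanSpace ℝ (Fin m)))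
    (hKstar : Kstar = {w | ∀ u ∈ K, 0 ≤ ⟪w, u⟫})
    (NX : Set (EuclideanSpace ℝ (Fin n)))
    (hNX : NX = {s | ∀ x' ∈ X, ⟪s, x' - xbar⟫ ≤ 0})
    (TX : Set (EuclideanSpace ℝ (Fin n)))
    (hTX : TX = closure {d | ∃ t : ℝ, 0 ≤ t ∧ ∃ x' ∈ X, d = t • (x' - xbar)})
    (M : Set (EuclideanSpace ℝ (Fin p) × EuclideanSpace ℝ (Fin m)))
    (hM : M = {vl | vl.2 ∈ Kstar ∧
      -(gradient f xbar + ContinuousLinearMap.adjoint (fderiv ℝ h xbar) vl.1 +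
          ContinuousLinearMap.adjoint (fderiv ℝ g xbar) vl.2) ∈ NX ∧
      ⟪vl.2, g xbar⟫ = 0})
    -- (i) nondegeneracy of the equality system relative to X
    (hi : ∀ (v : EuclideanSpace ℝ (Fin p)) (s : EuclideanSpace ℝ (Fin n)), s ∈ NX →
      ContinuousLinearMap.adjoint (fderiv ℝ h xbar) v + s = 0 → v = 0 ∧ s = 0)
    -- (ii) MFCQ direction
    (hii : ∃ d ∈ TX, fderiv ℝ h xbar d = 0 ∧ g xbar + fderiv ℝ g xbar d ∈ -(interior K)) :
    Bornology.IsBounded M := by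

  classical
  subst hM hKstar hNX hTX
  by_contra hb
  rw [isBounded_iff_forall_norm_le] at hb
  push_neg at hb
  obtain ⟨d, hdT, hd1, hd2⟩ := hii
  set A := ContinuousLinearMap.adjoint (fderiv ℝ h xbar) with hA
  set B := ContinuousLinearMap.adjoint (fderiv ℝ g xbar) with hB
  set c := gradient f xbar with hc
  choose z hzM hznorm using fun k : ℕ => hb ((k : ℝ) + 1)
  have hzK : ∀ k, ∀ uu ∈ K, 0 ≤ ⟪(z k).2, uu⟫ := fun k => (hzM k).1
  have hzN : ∀ k, ∀ x' ∈ X, ⟪-(c + A (z k).1 + B (z k).2), x' - xbar⟫ ≤ 0 :=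
    fun k => (hzM k).2.1
  have hzg : ∀ k, ⟪(z k).2, g xbar⟫ = 0 := fun k => (hzM k).2.2
  set t : ℕ → ℝ := fun k => ‖z k‖⁻¹ with ht
  have hzpos : ∀ k, (0:ℝ) < ‖z k‖ := fun k => lt_trans (by positivity) (hznorm k)
  have htpos : ∀ k, 0 < t k := fun k => inv_pos.2 (hzpos k)
  have ht0 : Filter.Tendsto t Filter.atTop (nhds 0) := by
    apply squeeze_zero (fun k => (htpos k).le) (fun k => ?_)
      tendsto_one_div_add_atTop_nhds_zero_nat
    rw [one_div]
    exact inv_anti₀ (by positivity) (hznorm k).le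
  set u : ℕ → (EuclideanSpace ℝ (Fin p) × EuclideanSpace ℝ (Fin m)) :=
    fun k => t k • z k with hu
  have hu1 : ∀ k, (u k).1 = t k • (z k).1 := fun k => rfl
  have hu2 : ∀ k, (u k).2 = t k • (z k).2 := fun k => rfl
  have hunorm : ∀ k, u k ∈ Metric.sphere (0 : EuclideanSpace ℝ (Fin p) × EuclideanSpace ℝ (Fin m)) 1 := by
    intro k
    rw [mem_sphere_zero_iff_norm, hu]
    simp only [norm_smul, ht, Real.norm_eq_abs, abs_of_pos (htpos k)]
    rw [abs_of_pos (inv_pos.2 (hzpos k))]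
    exact inv_mul_cancel₀ (hzpos k).ne'
  obtain ⟨wl, hwl, φ, hφ, hlim⟩ := (isCompact_sphere
    (0 : EuclideanSpace ℝ (Fin p) × EuclideanSpace ℝ (Fin m)) 1).tendsto_subseq hunorm
  have hφat : Filter.Tendsto φ Filter.atTop Filter.atTop := hφ.tendsto_atTop
  have htφ : Filter.Tendsto (fun i => t (φ i)) Filter.atTop (nhds 0) := ht0.comp hφat
  have hlim1 : Filter.Tendsto (fun i => (u (φ i)).1) Filter.atTop (nhds wl.1) :=
    (continuous_fst.tendsto wl).comp hlim
  have hlim2 : Filter.Tendsto (fun i => (u (φ i)).2) Filter.atTop (nhds wl.2) :=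
    (continuous_snd.tendsto wl).comp hlim
  -- (a) the limit second component is in K*
  have hlamK : ∀ uu ∈ K, 0 ≤ ⟪wl.2, uu⟫ := by
    intro uu huu
    have hcont : Filter.Tendsto (fun i => ⟪(u (φ i)).2, uu⟫) Filter.atTop (nhds ⟪wl.2, uu⟫) :=
      hlim2.inner tendsto_const_nhds
    refine ge_of_tendsto' hcont (fun i => ?_)
    rw [hu2, real_inner_smul_left]
    exact mul_nonneg (htpos _).le (hzK _ uu huu)
  -- (b) complementarity in the limit
  have hlamg : ⟪wl.2, g xbar⟫ = 0 := by
    have hcont : Filter.Tendsto (fun i => ⟪(u (φ i)).2, g xbar⟫) Filter.atTop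
        (nhds ⟪wl.2, g xbar⟫) := hlim2.inner tendsto_const_nhds
    have h0 : (fun i => ⟪(u (φ i)).2, g xbar⟫) = fun _ => (0:ℝ) := by
      funext i
      rw [hu2, real_inner_smul_left, hzg, mul_zero]
    rw [h0] at hcont
    exact (tendsto_nhds_unique hcont tendsto_const_nhds).symm ▸ rfl
  -- (c) the limit of the scaled stationarity condition
  have hsN : ∀ x' ∈ X, ⟪-(A wl.1 + B wl.2), x' - xbar⟫ ≤ 0 := by
    intro x' hx'
    have h1 : Filter.Tendsto (fun i => t (φ i) • c) Filter.atTop (nhds (0:EuclideanSpace ℝ (Fin n))) := by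
      simpa using htφ.smul_const c
    have h2 : Filter.Tendsto (fun i => A (u (φ i)).1) Filter.atTop (nhds (A wl.1)) :=
      (A.continuous.tendsto _).comp hlim1
    have h3 : Filter.Tendsto (fun i => B (u (φ i)).2) Filter.atTop (nhds (B wl.2)) :=
      (B.continuous.tendsto _).comp hlim2
    have hT : Filter.Tendsto
        (fun i => ⟪-(t (φ i) • c + A (u (φ i)).1 + B (u (φ i)).2), x' - xbar⟫)
        Filter.atTop (nhds ⟪-(A wl.1 + B wl.2), x' - xbar⟫) := by
      have h4 : Filter.Tendsto (fun i => -(t (φ i) • c + A (u (φ i)).1 + B (u (φ i)).2))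
          Filter.atTop (nhds (-((0:EuclideanSpace ℝ (Fin n)) + A wl.1 + B wl.2))) :=
        (((h1.add h2).add h3).neg)
      have h5 : Filter.Tendsto (fun _ : ℕ => x' - xbar) Filter.atTop (nhds (x' - xbar)) :=
        tendsto_const_nhds
      have h6 := Filter.Tendsto.inner (𝕜 := ℝ) h4 h5
      simpa using h6
    refine le_of_tendsto' hT (fun i => ?_)
    have key : -(t (φ i) • c + A (u (φ i)).1 + B (u (φ i)).2)
        = t (φ i) • -(c + A (z (φ i)).1 + B (z (φ i)).2) := by
      rw [hu1, hu2, map_smul, map_smul, smul_neg, smul_add, smul_add]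
    rw [key, real_inner_smul_left]
    have := mul_le_mul_of_nonneg_left (hzN (φ i) x' hx') (htpos (φ i)).le
    simpa using this
  -- pairing with the MFCQ direction d
  have htd : ⟪-(A wl.1 + B wl.2), d⟫ ≤ 0 := by
    have hclosed : IsClosed {w : EuclideanSpace ℝ (Fin n) | ⟪-(A wl.1 + B wl.2), w⟫ ≤ 0} :=
      isClosed_le (Continuous.inner continuous_const continuous_id) continuous_const
    refine closure_minimal ?_ hclosed hdT
    rintro w ⟨t0, ht0', x', hx', rfl⟩
    rw [Set.mem_setOf_eq, real_inner_smul_right]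
    have := mul_le_mul_of_nonneg_left (hsN x' hx') ht0'
    simpa using this
  have hge : 0 ≤ ⟪wl.2, fderiv ℝ g xbar d⟫ := by
    have h' := htd
    rw [inner_neg_left, inner_add_left, hA, hB, ContinuousLinearMap.adjoint_inner_left,
      ContinuousLinearMap.adjoint_inner_left, hd1, inner_zero_right] at h'
    linarith
  have hwint : -(g xbar + fderiv ℝ g xbar d) ∈ interior K := by rwa [Set.mem_neg] at hd2
  have hle : ⟪wl.2, fderiv ℝ g xbar d⟫ ≤ 0 := by
    have h0 : 0 ≤ ⟪wl.2, -(g xbar + fderiv ℝ g xbar d)⟫ :=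
      hlamK _ (interior_subset hwint)
    rw [inner_neg_right, inner_add_right, hlamg] at h0
    linarith
  have hinner0 : ⟪wl.2, -(g xbar + fderiv ℝ g xbar d)⟫ = 0 := by
    rw [inner_neg_right, inner_add_right, hlamg]
    linarith
  -- λ∞ = 0 using interiority
  have hlam0 : wl.2 = 0 := by
    by_contra hne
    have hnpos : 0 < ‖wl.2‖ := norm_pos_iff.2 hne
    obtain ⟨ε, hε, hball⟩ := Metric.isOpen_iff.1 isOpen_interior _ hwint
    set δ : ℝ := ε / (2 * ‖wl.2‖) with hδdef
    have hδ : 0 < δ := by positivity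
    have hmem : -(g xbar + fderiv ℝ g xbar d) - δ • wl.2 ∈ K := by
      apply interior_subset
      apply hball
      rw [Metric.mem_ball, dist_eq_norm]
      have : -(g xbar + fderiv ℝ g xbar d) - δ • wl.2 - -(g xbar + fderiv ℝ g xbar d)
          = -(δ • wl.2) := by abel
      rw [this, norm_neg, norm_smul, Real.norm_eq_abs, abs_of_pos hδ]
      have hcalc : δ * ‖wl.2‖ = ε / 2 := by
        rw [hδdef]; field_simp
      rw [hcalc]; linarith
    have h0 := hlamK _ hmem
    rw [inner_sub_right, hinner0, real_inner_smul_right, real_inner_self_eq_norm_sq] at h0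
    have hpos : 0 < δ * ‖wl.2‖ ^ 2 := by positivity
    linarith
  -- v∞ = 0 using (i)
  have hsN' : -(A wl.1) ∈ {s : EuclideanSpace ℝ (Fin n) | ∀ x' ∈ X, ⟪s, x' - xbar⟫ ≤ 0} := by
    intro x' hx'
    have := hsN x' hx'
    rw [hlam0] at this
    simpa using this
  obtain ⟨hv0, -⟩ := hi wl.1 (-(A wl.1)) hsN' (by abel)
  have hzero : wl = 0 := Prod.ext hv0 hlam0
  rw [mem_sphere_zero_iff_norm, hzero, norm_zero] at hwl
  exact one_ne_zero hwl.symm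
end

section
/- Let E be a complete real normed vector space, S ⊆ E a nonempty closed set, q ∈ (0,1), C ≥ 0, D ≥ 0, and let (z_t)_{t ≥ 0} be a sequence in E satisfying infDist(z_t, S) ≤ q^t · D and ‖z_{t+1} - z_t‖ ≤ C · infDist(z_t, S) for all t ≥ 0. Then ‖z_t - z_0‖ ≤ C·D/(1 - q) for all t ≥ 0, the sequence (z_t) converges to some point z̃, and z̃ ∈ S. -/
open Filter Metric Topology

/-- Unlike `dist_le_of_le_geometric_of_tendsto₀`, this needs no limit: the partial sums of the
geometric bound already dominate every `dist (f 0) (f n)`. -/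
theorem dist_zero_le_of_le_geometric {α : Type*} [PseudoMetricSpace α] {f : ℕ → α} {r C : ℝ}
    (hr : r < 1) (hu : ∀ n, dist (f n) (f (n + 1)) ≤ C * r ^ n) (n : ℕ) :
    dist (f 0) (f n) ≤ C / (1 - r) :=
  calc dist (f 0) (f n) ≤ ∑ i ∈ Finset.range n, dist (f i) (f (i + 1)) :=
        dist_le_range_sum_dist f n
    _ ≤ ∑ i ∈ Finset.range n, C * r ^ i := Finset.sum_le_sum fun i _ ↦ hu i
    _ ≤ C / (1 - r) :=
        sum_le_hasSum _ (fun i _ ↦ dist_nonneg.trans (hu i)) (aux_hasSum_of_le_geometric hr hu)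

theorem mem_of_tendsto_of_tendsto_infDist_zero {α ι : Type*} [PseudoMetricSpace α]
    {l : Filter ι} [l.NeBot] {S : Set α} (hS : IsClosed S) (hne : S.Nonempty) {f : ι → α}
    {a : α} (ha : Tendsto f l (𝓝 a)) (h0 : Tendsto (fun i ↦ infDist (f i) S) l (𝓝 0)) :
    a ∈ S :=
  (hS.mem_iff_infDist_zero hne).mpr <|
    tendsto_nhds_unique ((continuous_infDist_pt S).continuousAt.tendsto.comp ha) h0

theorem dist_succ_le_geometric_of_infDist_le {E : Type*} [SeminormedAddCommGroup E]
    {S : Set E} {z : ℕ → E} {q C D : ℝ} (hC : 0 ≤ C)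
    (hdist : ∀ t, infDist (z t) S ≤ q ^ t * D)
    (hstep : ∀ t, ‖z (t + 1) - z t‖ ≤ C * infDist (z t) S) (n : ℕ) :
    dist (z n) (z (n + 1)) ≤ C * D * q ^ n :=
  calc dist (z n) (z (n + 1)) = ‖z (n + 1) - z n‖ := by rw [dist_comm, dist_eq_norm]
    _ ≤ C * infDist (z n) S := hstep n
    _ ≤ C * (q ^ n * D) := mul_le_mul_of_nonneg_left (hdist n) hC
    _ = C * D * q ^ n := by ring

theorem stmt_19_general {E : Type*} [NormedAddCommGroup E] [CompleteSpace E]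
    (S : Set E) (hSne : S.Nonempty) (hSclosed : IsClosed S)
    (q : ℝ) (hq0 : 0 < q) (hq1 : q < 1) (C D : ℝ) (hC : 0 ≤ C)
    (z : ℕ → E)
    (hdist : ∀ t : ℕ, Metric.infDist (z t) S ≤ q ^ t * D)
    (hstep : ∀ t : ℕ, ‖z (t + 1) - z t‖ ≤ C * Metric.infDist (z t) S) :
    (∀ t : ℕ, ‖z t - z 0‖ ≤ C * D / (1 - q)) ∧
      ∃ ztilde ∈ S, Filter.Tendsto z Filter.atTop (nhds ztilde) := by
  have hgeom := dist_succ_le_geometric_of_infDist_le hC hdist hstep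
  obtain ⟨a, ha⟩ := cauchySeq_tendsto_of_complete (cauchySeq_of_le_geometric q _ hq1 hgeom)
  refine ⟨fun t ↦ ?_, a, ?_, ha⟩
  · rw [← dist_eq_norm, dist_comm]
    exact dist_zero_le_of_le_geometric hq1 hgeom t
  · have hbound : Tendsto (fun t ↦ q ^ t * D) atTop (𝓝 0) := by
      simpa using (tendsto_pow_atTop_nhds_zero_of_lt_one hq0.le hq1).mul_const D
    exact mem_of_tendsto_of_tendsto_infDist_zero hSclosed hSne ha
      (squeeze_zero (fun _ ↦ infDist_nonneg) hdist hbound)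

/-- In a complete real normed vector space, if `S` is nonempty and closed,
`q ∈ (0,1)`, `C, D ≥ 0`, and the sequence `(z t)` satisfies `infDist (z t) S ≤ qᵗ·D` and
`‖z (t+1) - z t‖ ≤ C·infDist (z t) S` for all `t`, then `‖z t - z 0‖ ≤ C·D/(1 - q)` for all
`t`, and the sequence converges to some point of `S`. -/
theorem stmt_19 {E : Type*} [NormedAddCommGroup E] [NormedSpace ℝ E] [CompleteSpace E]
    (S : Set E) (hSne : S.Nonempty) (hSclosed : IsClosed S)
    (q : ℝ) (hq0 : 0 < q) (hq1 : q < 1) (C D : ℝ) (hC : 0 ≤ C) (hD : 0 ≤ D)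
    (z : ℕ → E)
    (hdist : ∀ t : ℕ, Metric.infDist (z t) S ≤ q ^ t * D)
    (hstep : ∀ t : ℕ, ‖z (t + 1) - z t‖ ≤ C * Metric.infDist (z t) S) :
    (∀ t : ℕ, ‖z t - z 0‖ ≤ C * D / (1 - q)) ∧
      ∃ ztilde ∈ S, Filter.Tendsto z Filter.atTop (nhds ztilde) :=
  stmt_19_general S hSne hSclosed q hq0 hq1 C D hC z hdist hstep
end
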